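/- arXiv:2605.27834 — 9 statements merged into one kernel-verified Lean document; each statement's English description precedes it below -/
import Mathlib

section
/- Suppose r(s,a) ≥ 0 for all (s,a), and let q₂* be the unique solution of q = r + γ₂·P₂ Ω(q). Then (i) q₂*(s,a) ≥ 0 for all (s,a); (ii) every q₂ : S × A → ℝ satisfying the relaxed inequality r + γ₂·P₂ Ω(q₂) ≤ q₂ pointwise satisfies q₂ ≥ q₂* pointwise, and hence ‖q₂‖_{ρ₂} ≥ ‖q₂*‖_{ρ₂} for any probability weight ρ₂ on S × A; (iii) if ρ₂ has full support, then any q₂ feasible for the relaxed inequality with ‖q₂‖_{ρ₂} = ‖q₂*‖_{ρ₂} equals q₂*, so the relaxed constraint is tight at every minimum-ρ₂-norm feasible solution. -/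
/-!
The soft value operator `Ω` is monotone and commutes with adding constants, so the Bellman
operator `T q = r + γ P Ω(q)` satisfies a comparison principle: a subsolution `q' ≤ T q'` lies
below a supersolution `T q ≤ q`. At a point where `q - q'` attains its minimum `m`, the two
inequalities give `m ≥ γ m`, hence `m ≥ 0`. Since `r ≥ 0` and `Ω 0 = 0`, the zero function is a
subsolution, so `q₂* ≥ 0`; the fixed point `q₂*` is itself a subsolution, so every relaxed-feasible
`q₂` dominates it. Squaring preserves `0 ≤ q₂* ≤ q₂`, which gives the norm inequality, and with
full support equality of the norms forces equality at every point.
-/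

section Comparison

variable {S A : Type*} [Fintype S]

def bellman (r : S × A → ℝ) (γ : ℝ) (P : S → A → S → ℝ) (V : S → ℝ) (x : S × A) : ℝ :=
  r x + γ * ∑ s', P x.1 x.2 s' * V s'

variable {r : S × A → ℝ} {γ : ℝ} {P : S → A → S → ℝ}

lemma bellman_add_const_le (hP0 : ∀ s a s', 0 ≤ P s a s') (hP1 : ∀ s a, ∑ s', P s a s' = 1)
    (hγ0 : 0 ≤ γ) {V W : S → ℝ} {c : ℝ} (hVW : ∀ s, V s + c ≤ W s) (x : S × A) :
    bellman r γ P V x + γ * c ≤ bellman r γ P W x := by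
  have hexp : ∑ s', P x.1 x.2 s' * (V s' + c) = (∑ s', P x.1 x.2 s' * V s') + c := by
    simp only [mul_add, Finset.sum_add_distrib, ← Finset.sum_mul, hP1, one_mul]
  have hle : ∑ s', P x.1 x.2 s' * (V s' + c) ≤ ∑ s', P x.1 x.2 s' * W s' :=
    Finset.sum_le_sum fun s' _ => mul_le_mul_of_nonneg_left (hVW s') (hP0 _ _ s')
  unfold bellman
  linarith [mul_le_mul_of_nonneg_left (hexp ▸ hle) hγ0]

theorem bellman_comparison [Fintype A] (hP0 : ∀ s a s', 0 ≤ P s a s')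
    (hP1 : ∀ s a, ∑ s', P s a s' = 1) (hγ0 : 0 ≤ γ) (hγ1 : γ < 1)
    {Ω : (S × A → ℝ) → S → ℝ} (hmono : Monotone Ω)
    (hshift : ∀ q c s, Ω (fun x => q x + c) s = Ω q s + c)
    {q' q : S × A → ℝ} (hsub : ∀ x, q' x ≤ bellman r γ P (Ω q') x)
    (hsuper : ∀ x, bellman r γ P (Ω q) x ≤ q x) (x : S × A) : q' x ≤ q x := by
  obtain ⟨x₀, -, hx₀⟩ :=
    Finset.exists_min_image Finset.univ (fun y => q y - q' y) ⟨x, Finset.mem_univ x⟩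
  set m := q x₀ - q' x₀
  have hshifted : (fun y => q' y + m) ≤ q := fun y => by
    have := hx₀ y (Finset.mem_univ y); linarith
  have hΩ : ∀ s, Ω q' s + m ≤ Ω q s := fun s => (hshift q' m s).symm.le.trans (hmono hshifted s)
  have hstep := bellman_add_const_le (r := r) hP0 hP1 hγ0 hΩ x₀
  have hγm : γ * m ≤ m := by linarith [hsub x₀, hsuper x₀]
  have hm : 0 ≤ m := by nlinarith
  linarith [hx₀ x (Finset.mem_univ x)]

end Comparison

section SoftValue

variable {S A : Type*} [Fintype A]

noncomputable def softValue (τ : ℝ) (π : S → A → ℝ) (q : S × A → ℝ) (s : S) : ℝ :=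
  τ * Real.log (∑ a, π s a * Real.exp (q (s, a) / τ))

variable {τ : ℝ} {π : S → A → ℝ}

lemma softValue_zero (hπ1 : ∀ s, ∑ a, π s a = 1) (s : S) : softValue τ π 0 s = 0 := by
  simp [softValue, hπ1 s]

variable [Nonempty A]

lemma sum_mul_exp_pos (hπ0 : ∀ s a, 0 < π s a) (q : S × A → ℝ) (s : S) :
    0 < ∑ a, π s a * Real.exp (q (s, a) / τ) :=
  Finset.sum_pos (fun a _ => mul_pos (hπ0 s a) (Real.exp_pos _)) Finset.univ_nonempty

lemma softValue_add_const (hπ0 : ∀ s a, 0 < π s a) (hτ : τ ≠ 0) (q : S × A → ℝ) (c : ℝ) (s : S) :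
    softValue τ π (fun x => q x + c) s = softValue τ π q s + c := by
  have hfactor : ∑ a, π s a * Real.exp ((q (s, a) + c) / τ)
      = Real.exp (c / τ) * ∑ a, π s a * Real.exp (q (s, a) / τ) := by
    rw [Finset.mul_sum]
    refine Finset.sum_congr rfl fun a _ => ?_
    rw [add_div, Real.exp_add]; ring
  rw [softValue, softValue, hfactor,
    Real.log_mul (Real.exp_ne_zero _) (sum_mul_exp_pos hπ0 q s).ne', Real.log_exp]
  field_simp
  ring

lemma softValue_mono (hπ0 : ∀ s a, 0 < π s a) (hτ : 0 < τ) : Monotone (softValue τ π) := by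
  intro q q' hqq' s
  refine mul_le_mul_of_nonneg_left (Real.log_le_log (sum_mul_exp_pos hπ0 q s) ?_) hτ.le
  refine Finset.sum_le_sum fun a _ => mul_le_mul_of_nonneg_left ?_ (hπ0 s a).le
  exact Real.exp_le_exp.2 (div_le_div_of_nonneg_right (hqq' (s, a)) hτ.le)

end SoftValue

section WeightedNorm

variable {ι : Type*} [Fintype ι] {ρ f g : ι → ℝ}

lemma sqrt_sum_mul_sq_le_of_le (hρ : ∀ x, 0 ≤ ρ x) (hf : ∀ x, 0 ≤ f x) (hfg : ∀ x, f x ≤ g x) :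
    √(∑ x, ρ x * f x ^ 2) ≤ √(∑ x, ρ x * g x ^ 2) :=
  Real.sqrt_le_sqrt <| Finset.sum_le_sum fun x _ =>
    mul_le_mul_of_nonneg_left (pow_le_pow_left₀ (hf x) (hfg x) 2) (hρ x)

lemma eq_of_sqrt_sum_mul_sq_eq (hρ : ∀ x, 0 < ρ x) (hf : ∀ x, 0 ≤ f x)
    (hfg : ∀ x, f x ≤ g x) (h : √(∑ x, ρ x * g x ^ 2) = √(∑ x, ρ x * f x ^ 2)) : g = f := by
  have hsum : ∑ x, ρ x * f x ^ 2 = ∑ x, ρ x * g x ^ 2 := by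
    refine ((Real.sqrt_inj ?_ ?_).1 h).symm <;>
      exact Finset.sum_nonneg fun x _ => mul_nonneg (hρ x).le (sq_nonneg _)
  have hterm := (Finset.sum_eq_sum_iff_of_le fun x _ =>
    mul_le_mul_of_nonneg_left (pow_le_pow_left₀ (hf x) (hfg x) 2) (hρ x).le).1 hsum
  funext x
  have hsq := mul_left_cancel₀ (hρ x).ne' (hterm x (Finset.mem_univ x))
  exact ((pow_left_inj₀ (hf x) ((hf x).trans (hfg x)) two_ne_zero).1 hsq).symm

end WeightedNorm

theorem stmt_3_general {S A : Type*} [Fintype S] [Fintype A] [Nonempty A]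
    (τ₂ : ℝ) (hτ₂ : 0 < τ₂)
    (πref : S → A → ℝ) (hπ0 : ∀ s a, 0 < πref s a) (hπ1 : ∀ s, ∑ a, πref s a = 1)
    (P₂ : S → A → S → ℝ) (hP0 : ∀ s a s', 0 ≤ P₂ s a s') (hP1 : ∀ s a, ∑ s', P₂ s a s' = 1)
    (γ₂ : ℝ) (hγ0 : 0 ≤ γ₂) (hγ1 : γ₂ < 1)
    (r : S × A → ℝ) (hr : ∀ x, 0 ≤ r x)
    (Ω : (S × A → ℝ) → S → ℝ)
    (hΩ : ∀ q s, Ω q s = τ₂ * Real.log (∑ a, πref s a * Real.exp (q (s, a) / τ₂)))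
    (q₂s : S × A → ℝ)
    (hfix : ∀ x : S × A, q₂s x = r x + γ₂ * ∑ s', P₂ x.1 x.2 s' * Ω q₂s s') :
    (∀ x, 0 ≤ q₂s x) ∧
    (∀ q₂ : S × A → ℝ,
        (∀ x : S × A, r x + γ₂ * ∑ s', P₂ x.1 x.2 s' * Ω q₂ s' ≤ q₂ x) →
        (∀ x, q₂s x ≤ q₂ x) ∧
          ∀ ρ₂ : S × A → ℝ, (∀ x, 0 ≤ ρ₂ x) → (∑ x, ρ₂ x = 1) →
            Real.sqrt (∑ x, ρ₂ x * q₂s x ^ 2) ≤ Real.sqrt (∑ x, ρ₂ x * q₂ x ^ 2)) ∧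
    (∀ ρ₂ : S × A → ℝ, (∀ x, 0 < ρ₂ x) → (∑ x, ρ₂ x = 1) →
        ∀ q₂ : S × A → ℝ,
          (∀ x : S × A, r x + γ₂ * ∑ s', P₂ x.1 x.2 s' * Ω q₂ s' ≤ q₂ x) →
          Real.sqrt (∑ x, ρ₂ x * q₂ x ^ 2) = Real.sqrt (∑ x, ρ₂ x * q₂s x ^ 2) →
          q₂ = q₂s) := by
  obtain rfl : Ω = softValue τ₂ πref := funext fun q => funext (hΩ q)
  have compare {q' q : S × A → ℝ} (hsub : ∀ x, q' x ≤ bellman r γ₂ P₂ (softValue τ₂ πref q') x)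
      (hsuper : ∀ x, bellman r γ₂ P₂ (softValue τ₂ πref q) x ≤ q x) (x : S × A) : q' x ≤ q x :=
    bellman_comparison hP0 hP1 hγ0 hγ1 (softValue_mono hπ0 hτ₂)
      (softValue_add_const hπ0 hτ₂.ne') hsub hsuper x
  have hnonneg : ∀ x, 0 ≤ q₂s x :=
    compare (q' := 0) (fun x => by simp [bellman, softValue_zero hπ1, hr x]) (fun x => (hfix x).ge)
  have hdom : ∀ q₂ : S × A → ℝ, (∀ x, bellman r γ₂ P₂ (softValue τ₂ πref q₂) x ≤ q₂ x) →
      ∀ x, q₂s x ≤ q₂ x :=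
    fun _ hq => compare (fun x => (hfix x).le) hq
  exact ⟨hnonneg,
    fun q₂ hq => ⟨hdom q₂ hq, fun ρ₂ hρ _ => sqrt_sum_mul_sq_le_of_le hρ hnonneg (hdom q₂ hq)⟩,
    fun ρ₂ hρ _ q₂ hq hnorm => eq_of_sqrt_sum_mul_sq_eq hρ hnonneg (hdom q₂ hq) hnorm⟩

/-- Tightness claim of Theorem 1: if the reward is nonnegative, the fixed point
`q₂*` of the target soft Bellman equation is nonnegative, every relaxed-feasible
`q₂` dominates it pointwise (hence in `ρ₂`-norm), and under full support any
relaxed-feasible solution of minimal `ρ₂`-norm equals `q₂*`. -/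
theorem stmt_3 {S A : Type*} [Fintype S] [Fintype A] [Nonempty S] [Nonempty A]
    (τ₂ : ℝ) (hτ₂ : 0 < τ₂)
    (πref : S → A → ℝ) (hπ0 : ∀ s a, 0 < πref s a) (hπ1 : ∀ s, ∑ a, πref s a = 1)
    (P₂ : S → A → S → ℝ) (hP0 : ∀ s a s', 0 ≤ P₂ s a s') (hP1 : ∀ s a, ∑ s', P₂ s a s' = 1)
    (γ₂ : ℝ) (hγ0 : 0 ≤ γ₂) (hγ1 : γ₂ < 1)
    (r : S × A → ℝ) (hr : ∀ x, 0 ≤ r x)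
    (Ω : (S × A → ℝ) → S → ℝ)
    (hΩ : ∀ q s, Ω q s = τ₂ * Real.log (∑ a, πref s a * Real.exp (q (s, a) / τ₂)))
    (q₂s : S × A → ℝ)
    (hfix : ∀ x : S × A, q₂s x = r x + γ₂ * ∑ s', P₂ x.1 x.2 s' * Ω q₂s s') :
    (∀ x, 0 ≤ q₂s x) ∧
    (∀ q₂ : S × A → ℝ,
        (∀ x : S × A, r x + γ₂ * ∑ s', P₂ x.1 x.2 s' * Ω q₂ s' ≤ q₂ x) →
        (∀ x, q₂s x ≤ q₂ x) ∧
          ∀ ρ₂ : S × A → ℝ, (∀ x, 0 ≤ ρ₂ x) → (∑ x, ρ₂ x = 1) →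
            Real.sqrt (∑ x, ρ₂ x * q₂s x ^ 2) ≤ Real.sqrt (∑ x, ρ₂ x * q₂ x ^ 2)) ∧
    (∀ ρ₂ : S × A → ℝ, (∀ x, 0 < ρ₂ x) → (∑ x, ρ₂ x = 1) →
        ∀ q₂ : S × A → ℝ,
          (∀ x : S × A, r x + γ₂ * ∑ s', P₂ x.1 x.2 s' * Ω q₂ s' ≤ q₂ x) →
          Real.sqrt (∑ x, ρ₂ x * q₂ x ^ 2) = Real.sqrt (∑ x, ρ₂ x * q₂s x ^ 2) →
          q₂ = q₂s) :=
  stmt_3_general τ₂ hτ₂ πref hπ0 hπ1 P₂ hP0 hP1 γ₂ hγ0 hγ1 r hr Ω hΩ q₂s hfix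
end

section
/- Assume (q₁*, q₂*) satisfies b₁(q₁*) = 0 and b₂(q₁*, q₂*) = 0, assume l₂*(s,a) ≥ 0 for all (s,a), and assume the dual adjoint identities: for all h : S × A → ℝ, ⟨l₂*, h − γ₂·P₂^{π₂*} h⟩_{ρ₂} = ⟨q₂*, h⟩_{ρ₂} and ⟨l₁*, h − γ₁·P₁^μ h⟩_{ρ₁} = β·⟨q₁*, h⟩_{ρ₁} + ⟨l₂*, h − Π_μ h⟩_{ρ₂}. Then (q₁*, q₂*, l₁*, l₂*) is a saddle point of L^β, i.e. L^β(q₁*, q₂*, l₁, l₂) ≤ L^β(q₁*, q₂*, l₁*, l₂*) ≤ L^β(q₁, q₂, l₁*, l₂*) for all q₁, q₂, l₁, l₂, and the quadratic growth inequality holds: for every (q₁, q₂), L^β(q₁, q₂, l₁*, l₂*) − L^β(q₁*, q₂*, l₁*, l₂*) ≥ (β/2)·‖q₁ − q₁*‖²_{ρ₁} + (1/2)·‖q₂ − q₂*‖²_{ρ₂}. -/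
open BigOperators

namespace Stmt4

variable {S A : Type*} [Fintype S] [Fintype A]

/-- Soft value operator `Ω(q)(s) = τ₂ log ∑_a π_ref(a|s) exp(q(s,a)/τ₂)`. -/
noncomputable def Omega (τ₂ : ℝ) (πref : S → A → ℝ) (q : S × A → ℝ) (s : S) : ℝ :=
  τ₂ * Real.log (∑ a, πref s a * Real.exp (q (s, a) / τ₂))

/-- Anchor averaging operator `(Π_μ q)(s,a) = ∑_{a'} μ(a'|s) q(s,a')`. -/
def Pimu (μ : S → A → ℝ) (q : S × A → ℝ) (x : S × A) : ℝ :=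
  ∑ a', μ x.1 a' * q (x.1, a')

/-- Source residual `b₁(q₁) = u + γ₁ P₁^μ q₁ - q₁`. -/
def b1 (P₁ : Matrix (S × A) (S × A) ℝ) (γ₁ : ℝ) (u q₁ : S × A → ℝ) (x : S × A) : ℝ :=
  u x + γ₁ * ∑ y, P₁ x y * q₁ y - q₁ x

/-- Target residual `b₂(q₁,q₂) = (I - Π_μ)q₁ + w + γ₂ P₂ Ω(q₂) - q₂`. -/
noncomputable def b2 (P₂ : S → A → S → ℝ) (μ πref : S → A → ℝ) (τ₂ γ₂ : ℝ)
    (w q₁ q₂ : S × A → ℝ) (x : S × A) : ℝ :=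
  (q₁ x - Pimu μ q₁ x) + w x + γ₂ * ∑ s', P₂ x.1 x.2 s' * Omega τ₂ πref q₂ s' - q₂ x

/-- Weighted inner product `⟨f,g⟩_ρ = ∑_x ρ(x) f(x) g(x)`. -/
def ip (ρ f g : S × A → ℝ) : ℝ := ∑ x, ρ x * f x * g x

/-- Coupled population Lagrangian `L^β`. -/
noncomputable def Lag (P₁ : Matrix (S × A) (S × A) ℝ) (P₂ : S → A → S → ℝ)
    (μ πref : S → A → ℝ) (τ₂ γ₁ γ₂ β : ℝ) (u w ρ₁ ρ₂ : S × A → ℝ)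
    (q₁ q₂ l₁ l₂ : S × A → ℝ) : ℝ :=
  β / 2 * ip ρ₁ q₁ q₁ + 1 / 2 * ip ρ₂ q₂ q₂ +
    ip ρ₁ l₁ (b1 P₁ γ₁ u q₁) + ip ρ₂ l₂ (b2 P₂ μ πref τ₂ γ₂ w q₁ q₂)

/-- Soft-optimal policy induced by `q₂*`. -/
noncomputable def pistar (τ₂ : ℝ) (πref : S → A → ℝ) (q₂s : S × A → ℝ) (s : S) (a : A) : ℝ :=
  πref s a * Real.exp (q₂s (s, a) / τ₂) / ∑ a', πref s a' * Real.exp (q₂s (s, a') / τ₂)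

/-- Operator `P₂^{π₂*}` acting on functions of `(s,a)`. -/
noncomputable def P2pi (P₂ : S → A → S → ℝ) (τ₂ : ℝ) (πref : S → A → ℝ)
    (q₂s : S × A → ℝ) (q : S × A → ℝ) (x : S × A) : ℝ :=
  ∑ s', P₂ x.1 x.2 s' * ∑ a', pistar τ₂ πref q₂s s' a' * q (s', a')

end Stmt4

open Stmt4

/-!
The residuals vanish at `(q₁*, q₂*)`, so there the Lagrangian equals `(β/2)‖q₁*‖² + (1/2)‖q₂*‖²`
whatever the multipliers; this gives the left saddle inequality. For the right one, `b₁` is affine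
and `b₂` is affine up to the term `γ₂ P₂ Ω(q₂)`, so the adjoint identities (applied to
`δᵢ = qᵢ - qᵢ*`) cancel every linear term in the primal gap and leave
`(β/2)‖δ₁‖² + (1/2)‖δ₂‖² + γ₂ ⟨l₂*, P₂(Ω q₂ - Ω q₂*) - P₂^{π₂*} δ₂⟩`.
The last term is nonnegative because `l₂* ≥ 0`, `P₂ ≥ 0` and the soft-max policy `π₂*` is the
gradient of the convex log-sum-exp map `Ω` at `q₂*`.
-/

open Finset

namespace Stmt4

section InnerProduct

variable {S A : Type*} [Fintype S] [Fintype A]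

lemma ip_add_right (ρ l f g : S × A → ℝ) :
    ip ρ l (fun x => f x + g x) = ip ρ l f + ip ρ l g := by
  simp only [ip, mul_add, sum_add_distrib]

lemma ip_sub_right (ρ l f g : S × A → ℝ) :
    ip ρ l (fun x => f x - g x) = ip ρ l f - ip ρ l g := by
  simp only [ip, mul_sub, sum_sub_distrib]

lemma ip_neg_right (ρ l f : S × A → ℝ) : ip ρ l (fun x => -f x) = -ip ρ l f := by
  simp only [ip, mul_neg, sum_neg_distrib]

lemma ip_const_mul_right (ρ l f : S × A → ℝ) (c : ℝ) :
    ip ρ l (fun x => c * f x) = c * ip ρ l f := by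
  simp only [ip, mul_sum]
  exact sum_congr rfl fun x _ => by ring

lemma ip_eq_zero_of_right_eq_zero (ρ l : S × A → ℝ) {f : S × A → ℝ} (hf : ∀ x, f x = 0) :
    ip ρ l f = 0 :=
  sum_eq_zero fun x _ => by rw [hf x, mul_zero]

lemma ip_nonneg (ρ l f : S × A → ℝ) (hρ : ∀ x, 0 ≤ ρ x) (hl : ∀ x, 0 ≤ l x)
    (hf : ∀ x, 0 ≤ f x) : 0 ≤ ip ρ l f :=
  sum_nonneg fun x _ => mul_nonneg (mul_nonneg (hρ x) (hl x)) (hf x)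

lemma ip_self_nonneg (ρ f : S × A → ℝ) (hρ : ∀ x, 0 ≤ ρ x) : 0 ≤ ip ρ f f :=
  sum_nonneg fun x _ => by rw [mul_assoc]; exact mul_nonneg (hρ x) (mul_self_nonneg _)

lemma ip_sub_self_sub (ρ q q' : S × A → ℝ) :
    ip ρ (fun x => q x - q' x) (fun x => q x - q' x) =
      ip ρ q q - ip ρ q' q' - 2 * ip ρ q' (fun x => q x - q' x) := by
  simp only [ip, mul_sum, ← sum_sub_distrib]
  exact sum_congr rfl fun x _ => by ring

end InnerProduct

section SoftValue

variable {S A : Type*} [Fintype A] [Nonempty A] {τ₂ : ℝ} {πref : S → A → ℝ}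

lemma partition_pos (hπref0 : ∀ s a, 0 < πref s a) (q : S × A → ℝ) (s : S) :
    0 < ∑ a, πref s a * Real.exp (q (s, a) / τ₂) :=
  sum_pos (fun a _ => mul_pos (hπref0 s a) (Real.exp_pos _)) univ_nonempty

lemma pistar_nonneg (hπref0 : ∀ s a, 0 < πref s a) (q : S × A → ℝ) (s : S) (a : A) :
    0 ≤ pistar τ₂ πref q s a :=
  div_nonneg (mul_pos (hπref0 s a) (Real.exp_pos _)).le (partition_pos hπref0 q s).le

lemma sum_pistar (hπref0 : ∀ s a, 0 < πref s a) (q : S × A → ℝ) (s : S) :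
    ∑ a, pistar τ₂ πref q s a = 1 := by
  simp only [pistar]
  rw [← sum_div, div_self (partition_pos hπref0 q s).ne']

lemma Omega_sub_Omega (hπref0 : ∀ s a, 0 < πref s a) (q q' : S × A → ℝ) (s : S) :
    Omega τ₂ πref q s - Omega τ₂ πref q' s =
      τ₂ * Real.log (∑ a, pistar τ₂ πref q' s a * Real.exp ((q (s, a) - q' (s, a)) / τ₂)) := by
  have hZ := (partition_pos (τ₂ := τ₂) hπref0 q' s).ne'
  have hfactor : ∑ a, πref s a * Real.exp (q (s, a) / τ₂) =
      (∑ a, πref s a * Real.exp (q' (s, a) / τ₂)) *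
        ∑ a, pistar τ₂ πref q' s a * Real.exp ((q (s, a) - q' (s, a)) / τ₂) := by
    simp only [pistar, mul_sum]
    refine sum_congr rfl fun a _ => ?_
    rw [sub_div, Real.exp_sub]
    field_simp
  rw [Omega, Omega, hfactor, Real.log_mul hZ (ne_of_gt ?_)]
  · ring
  · exact pos_of_mul_pos_right (hfactor ▸ partition_pos hπref0 q s) (partition_pos hπref0 q' s).le

lemma sum_pistar_mul_sub_le_Omega_sub (hτ₂ : 0 < τ₂) (hπref0 : ∀ s a, 0 < πref s a)
    (q q' : S × A → ℝ) (s : S) :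
    ∑ a, pistar τ₂ πref q' s a * (q (s, a) - q' (s, a)) ≤
      Omega τ₂ πref q s - Omega τ₂ πref q' s := by
  have hJensen := convexOn_exp.map_sum_le (t := univ) (p := fun a => (q (s, a) - q' (s, a)) / τ₂)
    (fun a _ => pistar_nonneg (τ₂ := τ₂) hπref0 q' s a) (sum_pistar hπref0 q' s)
    (fun a _ => Set.mem_univ _)
  simp only [smul_eq_mul] at hJensen
  rw [Omega_sub_Omega hπref0, ← div_le_iff₀' hτ₂, sum_div,
    Real.le_log_iff_exp_le (lt_of_lt_of_le (Real.exp_pos _) hJensen)]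
  simpa only [mul_div_assoc] using hJensen

noncomputable def bregmanRemainder [Fintype S] (P₂ : S → A → S → ℝ) (τ₂ : ℝ) (πref : S → A → ℝ)
    (q q' : S × A → ℝ) (x : S × A) : ℝ :=
  ∑ s', P₂ x.1 x.2 s' * (Omega τ₂ πref q s' - Omega τ₂ πref q' s') -
    P2pi P₂ τ₂ πref q' (fun y => q y - q' y) x

lemma bregmanRemainder_nonneg [Fintype S] {P₂ : S → A → S → ℝ} (hP₂0 : ∀ s a s', 0 ≤ P₂ s a s')
    (hτ₂ : 0 < τ₂) (hπref0 : ∀ s a, 0 < πref s a) (q q' : S × A → ℝ) (x : S × A) :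
    0 ≤ bregmanRemainder P₂ τ₂ πref q q' x :=
  sub_nonneg.2 <| sum_le_sum fun s' _ => mul_le_mul_of_nonneg_left
    (sum_pistar_mul_sub_le_Omega_sub hτ₂ hπref0 q q' s') (hP₂0 x.1 x.2 s')

end SoftValue

section Lagrangian

variable {S A : Type*} [Fintype S] [Fintype A]

lemma b1_sub_b1 (P₁ : Matrix (S × A) (S × A) ℝ) (γ₁ : ℝ) (u q₁ q₁' : S × A → ℝ) (x : S × A) :
    b1 P₁ γ₁ u q₁ x - b1 P₁ γ₁ u q₁' x =
      -((q₁ x - q₁' x) - γ₁ * ∑ y, P₁ x y * (q₁ y - q₁' y)) := by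
  simp only [b1, mul_sub, sum_sub_distrib]
  ring

lemma b2_sub_b2 (P₂ : S → A → S → ℝ) (μ πref : S → A → ℝ) (τ₂ γ₂ : ℝ)
    (w q₁ q₂ q₁' q₂' : S × A → ℝ) (x : S × A) :
    b2 P₂ μ πref τ₂ γ₂ w q₁ q₂ x - b2 P₂ μ πref τ₂ γ₂ w q₁' q₂' x =
      ((q₁ x - q₁' x) - Pimu μ (fun y => q₁ y - q₁' y) x) +
        γ₂ * ∑ s', P₂ x.1 x.2 s' * (Omega τ₂ πref q₂ s' - Omega τ₂ πref q₂' s') -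
        (q₂ x - q₂' x) := by
  simp only [b2, Pimu, mul_sub, sum_sub_distrib]
  ring

variable {P₁ : Matrix (S × A) (S × A) ℝ} {P₂ : S → A → S → ℝ} {μ πref : S → A → ℝ}
  {τ₂ γ₁ γ₂ β : ℝ} {u w ρ₁ ρ₂ q₁s q₂s : S × A → ℝ}

lemma Lag_eq_of_residuals_eq_zero (hb1 : ∀ x, b1 P₁ γ₁ u q₁s x = 0)
    (hb2 : ∀ x, b2 P₂ μ πref τ₂ γ₂ w q₁s q₂s x = 0) (l₁ l₂ : S × A → ℝ) :
    Lag P₁ P₂ μ πref τ₂ γ₁ γ₂ β u w ρ₁ ρ₂ q₁s q₂s l₁ l₂ =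
      β / 2 * ip ρ₁ q₁s q₁s + 1 / 2 * ip ρ₂ q₂s q₂s := by
  rw [Lag, ip_eq_zero_of_right_eq_zero ρ₁ l₁ hb1, ip_eq_zero_of_right_eq_zero ρ₂ l₂ hb2]
  ring

lemma Lag_sub_Lag_eq {l₁s l₂s : S × A → ℝ} (hb1 : ∀ x, b1 P₁ γ₁ u q₁s x = 0)
    (hb2 : ∀ x, b2 P₂ μ πref τ₂ γ₂ w q₁s q₂s x = 0)
    (hadj2 : ∀ h : S × A → ℝ,
      ip ρ₂ l₂s (fun x => h x - γ₂ * P2pi P₂ τ₂ πref q₂s h x) = ip ρ₂ q₂s h)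
    (hadj1 : ∀ h : S × A → ℝ,
      ip ρ₁ l₁s (fun x => h x - γ₁ * ∑ y, P₁ x y * h y) =
        β * ip ρ₁ q₁s h + ip ρ₂ l₂s (fun x => h x - Pimu μ h x))
    (q₁ q₂ : S × A → ℝ) :
    Lag P₁ P₂ μ πref τ₂ γ₁ γ₂ β u w ρ₁ ρ₂ q₁ q₂ l₁s l₂s -
        Lag P₁ P₂ μ πref τ₂ γ₁ γ₂ β u w ρ₁ ρ₂ q₁s q₂s l₁s l₂s =
      β / 2 * ip ρ₁ (fun x => q₁ x - q₁s x) (fun x => q₁ x - q₁s x) +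
        1 / 2 * ip ρ₂ (fun x => q₂ x - q₂s x) (fun x => q₂ x - q₂s x) +
        γ₂ * ip ρ₂ l₂s (bregmanRemainder P₂ τ₂ πref q₂ q₂s) := by
  have hdual1 : ip ρ₁ l₁s (b1 P₁ γ₁ u q₁) =
      -(β * ip ρ₁ q₁s (fun x => q₁ x - q₁s x) +
        ip ρ₂ l₂s (fun x => (q₁ x - q₁s x) - Pimu μ (fun y => q₁ y - q₁s y) x)) := by
    rw [← hadj1, ← ip_neg_right]
    exact congrArg (ip ρ₁ l₁s) (funext fun x => by rw [← b1_sub_b1, hb1, sub_zero])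
  have hdual2 : ip ρ₂ l₂s (b2 P₂ μ πref τ₂ γ₂ w q₁ q₂) =
      ip ρ₂ l₂s (fun x => (q₁ x - q₁s x) - Pimu μ (fun y => q₁ y - q₁s y) x) +
        γ₂ * ip ρ₂ l₂s (bregmanRemainder P₂ τ₂ πref q₂ q₂s) -
        ip ρ₂ q₂s (fun x => q₂ x - q₂s x) := by
    rw [← hadj2, ← ip_const_mul_right, ← ip_add_right, ← ip_sub_right]
    refine congrArg (ip ρ₂ l₂s) (funext fun x => ?_)
    rw [← sub_zero (b2 P₂ μ πref τ₂ γ₂ w q₁ q₂ x), ← hb2 x, b2_sub_b2, bregmanRemainder]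
    ring
  rw [Lag_eq_of_residuals_eq_zero hb1 hb2, Lag, hdual1, hdual2, ip_sub_self_sub ρ₁ q₁ q₁s,
    ip_sub_self_sub ρ₂ q₂ q₂s]
  ring

end Lagrangian

end Stmt4

open Stmt4

theorem stmt_4_general {S A : Type*} [Fintype S] [Fintype A] [Nonempty A]
    (P₂ : S → A → S → ℝ) (hP₂0 : ∀ s a s', 0 ≤ P₂ s a s')
    (P₁ : Matrix (S × A) (S × A) ℝ)
    (μ : S → A → ℝ)
    (τ₂ : ℝ) (hτ₂ : 0 < τ₂)
    (πref : S → A → ℝ) (hπref0 : ∀ s a, 0 < πref s a)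
    (γ₁ γ₂ β : ℝ) (hγ₂0 : 0 ≤ γ₂)
    (hβ : 0 ≤ β)
    (u w ρ₁ ρ₂ : S × A → ℝ)
    (hρ₁0 : ∀ x, 0 ≤ ρ₁ x)
    (hρ₂0 : ∀ x, 0 ≤ ρ₂ x)
    (q₁s q₂s l₁s l₂s : S × A → ℝ)
    (hb1 : ∀ x, b1 P₁ γ₁ u q₁s x = 0)
    (hb2 : ∀ x, b2 P₂ μ πref τ₂ γ₂ w q₁s q₂s x = 0)
    (hl₂pos : ∀ x, 0 ≤ l₂s x)
    (hadj2 : ∀ h : S × A → ℝ,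
      ip ρ₂ l₂s (fun x => h x - γ₂ * P2pi P₂ τ₂ πref q₂s h x) = ip ρ₂ q₂s h)
    (hadj1 : ∀ h : S × A → ℝ,
      ip ρ₁ l₁s (fun x => h x - γ₁ * ∑ y, P₁ x y * h y) =
        β * ip ρ₁ q₁s h + ip ρ₂ l₂s (fun x => h x - Pimu μ h x)) :
    (∀ l₁ l₂ : S × A → ℝ,
        Lag P₁ P₂ μ πref τ₂ γ₁ γ₂ β u w ρ₁ ρ₂ q₁s q₂s l₁ l₂ ≤
          Lag P₁ P₂ μ πref τ₂ γ₁ γ₂ β u w ρ₁ ρ₂ q₁s q₂s l₁s l₂s) ∧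
    (∀ q₁ q₂ : S × A → ℝ,
        Lag P₁ P₂ μ πref τ₂ γ₁ γ₂ β u w ρ₁ ρ₂ q₁s q₂s l₁s l₂s ≤
          Lag P₁ P₂ μ πref τ₂ γ₁ γ₂ β u w ρ₁ ρ₂ q₁ q₂ l₁s l₂s) ∧
    (∀ q₁ q₂ : S × A → ℝ,
        β / 2 * ip ρ₁ (fun x => q₁ x - q₁s x) (fun x => q₁ x - q₁s x) +
            1 / 2 * ip ρ₂ (fun x => q₂ x - q₂s x) (fun x => q₂ x - q₂s x) ≤
          Lag P₁ P₂ μ πref τ₂ γ₁ γ₂ β u w ρ₁ ρ₂ q₁ q₂ l₁s l₂s -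
            Lag P₁ P₂ μ πref τ₂ γ₁ γ₂ β u w ρ₁ ρ₂ q₁s q₂s l₁s l₂s) := by
  have hgrowth : ∀ q₁ q₂ : S × A → ℝ,
      β / 2 * ip ρ₁ (fun x => q₁ x - q₁s x) (fun x => q₁ x - q₁s x) +
          1 / 2 * ip ρ₂ (fun x => q₂ x - q₂s x) (fun x => q₂ x - q₂s x) ≤
        Lag P₁ P₂ μ πref τ₂ γ₁ γ₂ β u w ρ₁ ρ₂ q₁ q₂ l₁s l₂s -
          Lag P₁ P₂ μ πref τ₂ γ₁ γ₂ β u w ρ₁ ρ₂ q₁s q₂s l₁s l₂s := fun q₁ q₂ => by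
    rw [Lag_sub_Lag_eq hb1 hb2 hadj2 hadj1]
    exact le_add_of_nonneg_right (mul_nonneg hγ₂0 (ip_nonneg _ _ _ hρ₂0 hl₂pos
      (bregmanRemainder_nonneg hP₂0 hτ₂ hπref0 q₂ q₂s)))
  refine ⟨fun l₁ l₂ => ?_, fun q₁ q₂ => ?_, hgrowth⟩
  · rw [Lag_eq_of_residuals_eq_zero hb1 hb2, Lag_eq_of_residuals_eq_zero hb1 hb2]
  · refine sub_nonneg.1 (le_trans (add_nonneg ?_ ?_) (hgrowth q₁ q₂))
    · exact mul_nonneg (div_nonneg hβ zero_le_two) (ip_self_nonneg _ _ hρ₁0)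
    · exact mul_nonneg (by norm_num) (ip_self_nonneg _ _ hρ₂0)

/-- Theorem (Population saddle point and quadratic growth): given the dual
adjoint identities, `(q₁*, q₂*, l₁*, l₂*)` is a saddle point of `L^β` and the
quadratic-growth inequality holds. -/
theorem stmt_4 {S A : Type*} [Fintype S] [Fintype A] [Nonempty S] [Nonempty A]
    (P₂ : S → A → S → ℝ) (hP₂0 : ∀ s a s', 0 ≤ P₂ s a s') (hP₂1 : ∀ s a, ∑ s', P₂ s a s' = 1)
    (P₁ : Matrix (S × A) (S × A) ℝ) (hP₁0 : ∀ x y, 0 ≤ P₁ x y) (hP₁1 : ∀ x, ∑ y, P₁ x y = 1)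
    (μ : S → A → ℝ) (hμ0 : ∀ s a, 0 ≤ μ s a) (hμ1 : ∀ s, ∑ a, μ s a = 1)
    (τ₂ : ℝ) (hτ₂ : 0 < τ₂)
    (πref : S → A → ℝ) (hπref0 : ∀ s a, 0 < πref s a) (hπref1 : ∀ s, ∑ a, πref s a = 1)
    (γ₁ γ₂ β : ℝ) (hγ₁0 : 0 ≤ γ₁) (hγ₁1 : γ₁ < 1) (hγ₂0 : 0 ≤ γ₂) (hγ₂1 : γ₂ < 1)
    (hβ : 0 ≤ β)
    (u w ρ₁ ρ₂ : S × A → ℝ)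
    (hρ₁0 : ∀ x, 0 ≤ ρ₁ x) (hρ₁1 : ∑ x, ρ₁ x = 1)
    (hρ₂0 : ∀ x, 0 ≤ ρ₂ x) (hρ₂1 : ∑ x, ρ₂ x = 1)
    (q₁s q₂s l₁s l₂s : S × A → ℝ)
    (hb1 : ∀ x, b1 P₁ γ₁ u q₁s x = 0)
    (hb2 : ∀ x, b2 P₂ μ πref τ₂ γ₂ w q₁s q₂s x = 0)
    (hl₂pos : ∀ x, 0 ≤ l₂s x)
    (hadj2 : ∀ h : S × A → ℝ,
      ip ρ₂ l₂s (fun x => h x - γ₂ * P2pi P₂ τ₂ πref q₂s h x) = ip ρ₂ q₂s h)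
    (hadj1 : ∀ h : S × A → ℝ,
      ip ρ₁ l₁s (fun x => h x - γ₁ * ∑ y, P₁ x y * h y) =
        β * ip ρ₁ q₁s h + ip ρ₂ l₂s (fun x => h x - Pimu μ h x)) :
    (∀ l₁ l₂ : S × A → ℝ,
        Lag P₁ P₂ μ πref τ₂ γ₁ γ₂ β u w ρ₁ ρ₂ q₁s q₂s l₁ l₂ ≤
          Lag P₁ P₂ μ πref τ₂ γ₁ γ₂ β u w ρ₁ ρ₂ q₁s q₂s l₁s l₂s) ∧
    (∀ q₁ q₂ : S × A → ℝ,
        Lag P₁ P₂ μ πref τ₂ γ₁ γ₂ β u w ρ₁ ρ₂ q₁s q₂s l₁s l₂s ≤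
          Lag P₁ P₂ μ πref τ₂ γ₁ γ₂ β u w ρ₁ ρ₂ q₁ q₂ l₁s l₂s) ∧
    (∀ q₁ q₂ : S × A → ℝ,
        β / 2 * ip ρ₁ (fun x => q₁ x - q₁s x) (fun x => q₁ x - q₁s x) +
            1 / 2 * ip ρ₂ (fun x => q₂ x - q₂s x) (fun x => q₂ x - q₂s x) ≤
          Lag P₁ P₂ μ πref τ₂ γ₁ γ₂ β u w ρ₁ ρ₂ q₁ q₂ l₁s l₂s -
            Lag P₁ P₂ μ πref τ₂ γ₁ γ₂ β u w ρ₁ ρ₂ q₁s q₂s l₁s l₂s) :=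
  stmt_4_general P₂ hP₂0 P₁ μ τ₂ hτ₂ πref hπref0 γ₁ γ₂ β hγ₂0 hβ u w ρ₁ ρ₂ hρ₁0 hρ₂0 q₁s q₂s l₁s l₂s
    hb1 hb2 hl₂pos hadj2 hadj1
end

section
/- Let X be a nonempty finite set, K a row-stochastic matrix on X, γ ∈ [0,1), ρ a full-support probability weight on X, and q : X → ℝ with |q(x)| ≤ B for all x. Let d = (1−γ)·∑_{t≥0} γ^t (Kᵀ)^t ρ be the discounted occupancy, and assume d(x) ≤ κ·ρ(x) for all x. Then the dual function l(x) = ((I − γ·Kᵀ)⁻¹ (ρ ⊙ q))(x) / ρ(x) satisfies |l(x)| ≤ κ·B / (1−γ) for all x. -/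
open Matrix BigOperators

/-! The resolvent `(1 - γ Kᵀ)⁻¹` is the Neumann series `∑ γ^t (Kᵀ)^t`, which converges because the
entries of `(γ Kᵀ)^t` lie in `[0, γ^t]`. Hence it has nonnegative entries, so it is monotone:
`|(1 - γ Kᵀ)⁻¹ (ρ ⊙ q)| ≤ B (1 - γ Kᵀ)⁻¹ ρ = B d / (1 - γ) ≤ κ B ρ / (1 - γ)`. -/

theorem HasSum.matrix_mulVec {ι m n R : Type*} [Fintype n] [NonUnitalNonAssocSemiring R]
    [TopologicalSpace R] [IsTopologicalSemiring R] {f : ι → Matrix m n R} {M : Matrix m n R}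
    (hf : HasSum f M) (v : n → R) : HasSum (fun i => f i *ᵥ v) (M *ᵥ v) :=
  hf.map (mulVec.addMonoidHomLeft v) (continuous_id.matrix_mulVec continuous_const)

namespace Matrix

variable {n : Type*} [Fintype n]

theorem abs_mulVec_le_mul_mulVec {m R : Type*} [CommRing R] [LinearOrder R] [IsStrictOrderedRing R]
    {M : Matrix m n R} (hM : ∀ i j, 0 ≤ M i j) {w ρ : n → R} {c : R}
    (hw : ∀ j, |w j| ≤ c * ρ j) (i : m) : |(M *ᵥ w) i| ≤ c * (M *ᵥ ρ) i := by
  simp only [mulVec, dotProduct, Finset.mul_sum]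
  refine (Finset.abs_sum_le_sum_abs _ _).trans (Finset.sum_le_sum fun j _ => ?_)
  rw [abs_mul, abs_of_nonneg (hM i j), mul_left_comm]
  exact mul_le_mul_of_nonneg_left (hw j) (hM i j)

variable [DecidableEq n] {P : Matrix n n ℝ} {γ : ℝ}

theorem smul_pow_apply_mem_Icc_of_mem_colStochastic (hP : P ∈ colStochastic ℝ n) (hγ : 0 ≤ γ)
    (t : ℕ) (i j : n) : ((γ • P) ^ t) i j ∈ Set.Icc 0 (γ ^ t) := by
  have hPt := pow_mem hP t
  rw [smul_pow, smul_apply, smul_eq_mul]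
  exact ⟨mul_nonneg (pow_nonneg hγ t) (nonneg_of_mem_colStochastic hPt),
    mul_le_of_le_one_right (pow_nonneg hγ t) (le_one_of_mem_colStochastic hPt)⟩

theorem summable_smul_pow_of_mem_colStochastic (hP : P ∈ colStochastic ℝ n) (hγ0 : 0 ≤ γ)
    (hγ1 : γ < 1) : Summable fun t : ℕ => (γ • P) ^ t :=
  Pi.summable.2 fun i => Pi.summable.2 fun j =>
    (summable_geometric_of_lt_one hγ0 hγ1).of_nonneg_of_le
      (fun t => (smul_pow_apply_mem_Icc_of_mem_colStochastic hP hγ0 t i j).1)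
      (fun t => (smul_pow_apply_mem_Icc_of_mem_colStochastic hP hγ0 t i j).2)

theorem inv_one_sub_smul_eq_tsum_pow (hP : P ∈ colStochastic ℝ n) (hγ0 : 0 ≤ γ) (hγ1 : γ < 1) :
    (1 - γ • P)⁻¹ = ∑' t : ℕ, (γ • P) ^ t :=
  inv_eq_right_inv (summable_smul_pow_of_mem_colStochastic hP hγ0 hγ1).one_sub_mul_tsum_pow

theorem inv_one_sub_smul_apply_nonneg (hP : P ∈ colStochastic ℝ n) (hγ0 : 0 ≤ γ) (hγ1 : γ < 1)
    (i j : n) : 0 ≤ (1 - γ • P)⁻¹ i j := by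
  rw [inv_one_sub_smul_eq_tsum_pow hP hγ0 hγ1]
  have hsum := (summable_smul_pow_of_mem_colStochastic hP hγ0 hγ1).hasSum
  exact HasSum.nonneg (fun t => (smul_pow_apply_mem_Icc_of_mem_colStochastic hP hγ0 t i j).1)
    (Pi.hasSum.1 (Pi.hasSum.1 hsum i) j)

theorem hasSum_inv_one_sub_smul_mulVec (hP : P ∈ colStochastic ℝ n) (hγ0 : 0 ≤ γ) (hγ1 : γ < 1)
    (v : n → ℝ) : HasSum (fun t : ℕ => γ ^ t • (P ^ t *ᵥ v)) ((1 - γ • P)⁻¹ *ᵥ v) := by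
  rw [inv_one_sub_smul_eq_tsum_pow hP hγ0 hγ1]
  simpa only [smul_pow, smul_mulVec] using
    ((summable_smul_pow_of_mem_colStochastic hP hγ0 hγ1).hasSum.matrix_mulVec v)

end Matrix

theorem stmt_6_general {X : Type*} [Fintype X] [DecidableEq X]
    (K : Matrix X X ℝ) (hK0 : ∀ x y, 0 ≤ K x y) (hK1 : ∀ x, ∑ y, K x y = 1)
    (γ : ℝ) (hγ0 : 0 ≤ γ) (hγ1 : γ < 1)
    (ρ : X → ℝ) (hρpos : ∀ x, 0 < ρ x)
    (q : X → ℝ) (B : ℝ) (hq : ∀ x, |q x| ≤ B)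
    (κ : ℝ) (d : X → ℝ)
    (hd : ∀ x, d x = (1 - γ) * ∑' t : ℕ, γ ^ t * ((Kᵀ ^ t) *ᵥ ρ) x)
    (hcov : ∀ x, d x ≤ κ * ρ x) :
    ∀ x, |(((1 : Matrix X X ℝ) - γ • Kᵀ)⁻¹ *ᵥ fun y => ρ y * q y) x / ρ x| ≤
      κ * B / (1 - γ) := by
  intro x
  have hP : Kᵀ ∈ colStochastic ℝ X :=
    transpose_mem_colStochastic_iff_mem_rowStochastic.2 (mem_rowStochastic_iff_sum.2 ⟨hK0, hK1⟩)
  have h1γ : 0 < 1 - γ := sub_pos.2 hγ1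
  have hB : 0 ≤ B := (abs_nonneg _).trans (hq x)
  have hoccupancy : ((1 - γ • Kᵀ)⁻¹ *ᵥ ρ) x = d x / (1 - γ) := by
    rw [hd, mul_div_cancel_left₀ _ h1γ.ne']
    exact ((Pi.hasSum.1 (hasSum_inv_one_sub_smul_mulVec hP hγ0 hγ1 ρ)) x).tsum_eq.symm
  have hdual : |((1 - γ • Kᵀ)⁻¹ *ᵥ fun y => ρ y * q y) x| ≤ B * (d x / (1 - γ)) := by
    rw [← hoccupancy]
    refine abs_mulVec_le_mul_mulVec (inv_one_sub_smul_apply_nonneg hP hγ0 hγ1) (fun y => ?_) x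
    rw [abs_mul, abs_of_pos (hρpos y), mul_comm B]
    exact mul_le_mul_of_nonneg_left (hq y) (hρpos y).le
  calc |((1 - γ • Kᵀ)⁻¹ *ᵥ fun y => ρ y * q y) x / ρ x|
      = |((1 - γ • Kᵀ)⁻¹ *ᵥ fun y => ρ y * q y) x| / ρ x := by
        rw [abs_div, abs_of_pos (hρpos x)]
    _ ≤ B * (κ * ρ x / (1 - γ)) / ρ x := by
        have hbound : B * (d x / (1 - γ)) ≤ B * (κ * ρ x / (1 - γ)) := by gcongr; exact hcov x
        exact div_le_div_of_nonneg_right (hdual.trans hbound) (hρpos x).le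
    _ = κ * B / (1 - γ) := by
        field_simp [(hρpos x).ne']

/-- Dual boundedness (Proposition 'Dual representations and boundedness'): under
the occupancy coverage `d ≤ κ ρ` and `|q| ≤ B`, the dual
`l = ((I - γ Kᵀ)⁻¹ (ρ ⊙ q)) / ρ` satisfies `|l(x)| ≤ κ B / (1-γ)`. -/
theorem stmt_6 {X : Type*} [Fintype X] [Nonempty X] [DecidableEq X]
    (K : Matrix X X ℝ) (hK0 : ∀ x y, 0 ≤ K x y) (hK1 : ∀ x, ∑ y, K x y = 1)
    (γ : ℝ) (hγ0 : 0 ≤ γ) (hγ1 : γ < 1)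
    (ρ : X → ℝ) (hρpos : ∀ x, 0 < ρ x) (hρ1 : ∑ x, ρ x = 1)
    (q : X → ℝ) (B : ℝ) (hq : ∀ x, |q x| ≤ B)
    (κ : ℝ) (d : X → ℝ)
    (hd : ∀ x, d x = (1 - γ) * ∑' t : ℕ, γ ^ t * ((Kᵀ ^ t) *ᵥ ρ) x)
    (hcov : ∀ x, d x ≤ κ * ρ x) :
    ∀ x, |(((1 : Matrix X X ℝ) - γ • Kᵀ)⁻¹ *ᵥ fun y => ρ y * q y) x / ρ x| ≤
      κ * B / (1 - γ) :=
  stmt_6_general K hK0 hK1 γ hγ0 hγ1 ρ hρpos q B hq κ d hd hcov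
end

section
/- Under the coverage assumptions d₁ ≤ κ₁·ρ₁, d₂ ≤ κ₁₂·ρ₁, d₂^S ≤ κ₁₂^S·ρ₁^S and μ(a|s) ≤ κ_{μ|b1}·π_{b1}(a|s) pointwise, and assuming |q₂*(s,a)| ≤ B for all (s,a), the cross-environment source dual l_{1,cross} defined by l_{1,cross} = ((I − γ₁·(P₁^μ)ᵀ)⁻¹ (I − Π_μ)ᵀ (ρ₂ ⊙ l₂*)) / ρ₁ (componentwise quotient), where l₂* = ((I − γ₂·Mᵀ)⁻¹ (ρ₂ ⊙ q₂*)) / ρ₂, satisfies the sup-norm bound |l_{1,cross}(s,a)| ≤ κ₁·(κ₁₂ + κ_{μ|b1}·κ₁₂^S)·B / ((1−γ₁)(1−γ₂)) for all (s,a). -/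
/-! For a row-stochastic `N` and `0 ≤ γ < 1` the ℓ∞ operator norm of `γ N` is `γ < 1`, so the
resolvent `(1 - γ Nᵀ)⁻¹` is the Neumann series `∑ γᵗ (Nᵀ)ᵗ`. It therefore has nonnegative entries
and maps a source dominated by `c ρ` to a vector dominated by `c d / (1 - γ)`, where `d` is the
discounted occupancy of `ρ`. In environment 2 this bounds `ρ₂ ⊙ l₂*` by `B d₂ / (1 - γ₂)`; the
coverage assumptions turn that into a bound `C ρ₁` on `(I - Π_μ)ᵀ (ρ₂ ⊙ l₂*)`, and the same
estimate in environment 1, with `d₁ ≤ κ₁ ρ₁`, gives the claim. -/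

open Matrix

section

variable {n : Type*} [Fintype n]

theorem HasSum.matrix_mulVec_apply {ι : Type*} {f : ι → Matrix n n ℝ} {A : Matrix n n ℝ}
    (hf : HasSum f A) (v : n → ℝ) (x : n) :
    HasSum (fun i => (f i *ᵥ v) x) ((A *ᵥ v) x) := by
  simp only [mulVec, dotProduct]
  exact hasSum_sum fun y _ => ((Pi.hasSum.1 (Pi.hasSum.1 hf x)) y).mul_right (v y)

namespace Matrix

theorem abs_mulVec_le_mulVec {A : Matrix n n ℝ} (hA : ∀ x y, 0 ≤ A x y) {v u : n → ℝ}
    (hvu : ∀ y, |v y| ≤ u y) (x : n) : |(A *ᵥ v) x| ≤ (A *ᵥ u) x := calc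
  |(A *ᵥ v) x| ≤ ∑ y, |A x y * v y| := Finset.abs_sum_le_sum_abs _ _
  _ ≤ (A *ᵥ u) x := Finset.sum_le_sum fun y _ => by
    rw [abs_mul, abs_of_nonneg (hA x y)]
    exact mul_le_mul_of_nonneg_left (hvu y) (hA x y)

variable [DecidableEq n]

section NeumannSeries

attribute [local instance] Matrix.linftyOpNormedRing Matrix.linftyOpNormedAlgebra

theorem linfty_opNorm_le_one_of_mem_rowStochastic {N : Matrix n n ℝ}
    (hN : N ∈ rowStochastic ℝ n) : ‖N‖ ≤ 1 := by
  rw [linfty_opNorm_def, ← NNReal.coe_one, NNReal.coe_le_coe]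
  refine Finset.sup_le fun i _ => ?_
  rw [← NNReal.coe_le_coe]
  push_cast
  simp only [Real.norm_eq_abs, abs_of_nonneg (nonneg_of_mem_rowStochastic hN)]
  exact (sum_row_of_mem_rowStochastic hN i).le

theorem hasSum_pow_smul_inv_one_sub_smul {N : Matrix n n ℝ} (hN : N ∈ rowStochastic ℝ n)
    {γ : ℝ} (hγ0 : 0 ≤ γ) (hγ1 : γ < 1) :
    HasSum (fun t : ℕ => γ ^ t • N ^ t) (1 - γ • N)⁻¹ := by
  have hnorm : ‖γ • N‖ < 1 := calc
    ‖γ • N‖ ≤ ‖γ‖ * ‖N‖ := norm_smul_le γ N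
    _ ≤ γ * 1 := by
      rw [Real.norm_of_nonneg hγ0]
      exact mul_le_mul_of_nonneg_left (linfty_opNorm_le_one_of_mem_rowStochastic hN) hγ0
    _ < 1 := by linarith
  have h := hasSum_geom_series_inverse _ hnorm
  simp only [smul_pow] at h
  rw [nonsing_inv_eq_ringInverse]
  exact h

end NeumannSeries

theorem hasSum_pow_smul_transpose_inv {N : Matrix n n ℝ} (hN : N ∈ rowStochastic ℝ n)
    {γ : ℝ} (hγ0 : 0 ≤ γ) (hγ1 : γ < 1) :
    HasSum (fun t : ℕ => γ ^ t • Nᵀ ^ t) (1 - γ • Nᵀ)⁻¹ := by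
  simpa only [transpose_smul, transpose_pow, transpose_sub, transpose_one,
    transpose_nonsing_inv] using (hasSum_pow_smul_inv_one_sub_smul hN hγ0 hγ1).matrix_transpose

variable {N : Matrix n n ℝ} {γ : ℝ}

theorem inv_one_sub_smul_transpose_nonneg (hN : N ∈ rowStochastic ℝ n) (hγ0 : 0 ≤ γ)
    (hγ1 : γ < 1) (x y : n) : 0 ≤ (1 - γ • Nᵀ)⁻¹ x y := by
  refine HasSum.nonneg (fun t => ?_) (Pi.hasSum.1 (Pi.hasSum.1
    (hasSum_pow_smul_transpose_inv hN hγ0 hγ1) x) y)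
  rw [← transpose_pow]
  exact mul_nonneg (pow_nonneg hγ0 t) (nonneg_of_mem_rowStochastic (pow_mem hN t))

theorem occupancy_eq_mulVec_inv (hN : N ∈ rowStochastic ℝ n) (hγ0 : 0 ≤ γ) (hγ1 : γ < 1)
    {ρ d : n → ℝ} (hd : ∀ x, d x = (1 - γ) * ∑' t : ℕ, γ ^ t * ((Nᵀ ^ t) *ᵥ ρ) x) (x : n) :
    d x = (1 - γ) * (((1 - γ • Nᵀ)⁻¹) *ᵥ ρ) x := by
  rw [hd x, ((hasSum_pow_smul_transpose_inv hN hγ0 hγ1).matrix_mulVec_apply ρ x).tsum_eq.symm]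
  simp only [smul_mulVec, Pi.smul_apply, smul_eq_mul]

theorem occupancy_nonneg (hN : N ∈ rowStochastic ℝ n) (hγ0 : 0 ≤ γ) (hγ1 : γ < 1)
    {ρ d : n → ℝ} (hρ : ∀ x, 0 ≤ ρ x)
    (hd : ∀ x, d x = (1 - γ) * ∑' t : ℕ, γ ^ t * ((Nᵀ ^ t) *ᵥ ρ) x) (x : n) : 0 ≤ d x := by
  rw [hd x]
  refine mul_nonneg (by linarith) (tsum_nonneg fun t => mul_nonneg (pow_nonneg hγ0 t) ?_)
  rw [← transpose_pow, mulVec_transpose]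
  exact nonneg_vecMul_of_mem_rowStochastic (pow_mem hN t) hρ x

theorem abs_inv_one_sub_smul_transpose_mulVec_le (hN : N ∈ rowStochastic ℝ n) (hγ0 : 0 ≤ γ)
    (hγ1 : γ < 1) {ρ d : n → ℝ}
    (hd : ∀ x, d x = (1 - γ) * ∑' t : ℕ, γ ^ t * ((Nᵀ ^ t) *ᵥ ρ) x)
    {v : n → ℝ} {c : ℝ} (hv : ∀ y, |v y| ≤ c * ρ y) (x : n) :
    |(((1 - γ • Nᵀ)⁻¹) *ᵥ v) x| ≤ c * d x / (1 - γ) := calc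
  _ ≤ (((1 - γ • Nᵀ)⁻¹) *ᵥ (c • ρ)) x :=
    abs_mulVec_le_mulVec (inv_one_sub_smul_transpose_nonneg hN hγ0 hγ1) hv x
  _ = c * d x / (1 - γ) := by
    rw [occupancy_eq_mulVec_inv hN hγ0 hγ1 hd x, mulVec_smul, Pi.smul_apply, smul_eq_mul]
    field_simp [(by linarith : (1 - γ) ≠ 0)]

end Matrix

end

section PolicyProjection

variable {S A : Type*} [Fintype A]

/-- `(I - Π_μ)ᵀ m`, where `(Π_μ q)(s, a) = ∑ a', μ s a' * q (s, a')`. -/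
def oneSubPolicyProjTranspose (μ : S → A → ℝ) (m : S × A → ℝ) : S × A → ℝ :=
  fun y => m y - μ y.1 y.2 * ∑ a', m (y.1, a')

variable {ρ d : S × A → ℝ} {μ : S → A → ℝ} {κ κS κμ : ℝ}

theorem policy_mul_marginal_le (hρ : ∀ y, 0 < ρ y) (hd : ∀ y, 0 ≤ d y) (hμ0 : ∀ s a, 0 ≤ μ s a)
    (hμcov : ∀ s a, μ s a ≤ κμ * (ρ (s, a) / ∑ a', ρ (s, a')))
    (hcovS : ∀ s, ∑ a, d (s, a) ≤ κS * ∑ a, ρ (s, a)) (s : S) (a : A) :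
    μ s a * ∑ a', d (s, a') ≤ κμ * κS * ρ (s, a) := by
  have hρS : 0 < ∑ a', ρ (s, a') :=
    (hρ (s, a)).trans_le (Finset.single_le_sum (fun a' _ => (hρ (s, a')).le) (Finset.mem_univ a))
  calc μ s a * ∑ a', d (s, a')
      ≤ κμ * (ρ (s, a) / ∑ a', ρ (s, a')) * (κS * ∑ a', ρ (s, a')) :=
        mul_le_mul (hμcov s a) (hcovS s) (Finset.sum_nonneg fun a' _ => hd (s, a'))
          ((hμ0 s a).trans (hμcov s a))
    _ = κμ * κS * ρ (s, a) := by field_simp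

theorem abs_oneSubPolicyProjTranspose_le (hρ : ∀ y, 0 < ρ y) (hd : ∀ y, 0 ≤ d y)
    (hμ0 : ∀ s a, 0 ≤ μ s a) (hμcov : ∀ s a, μ s a ≤ κμ * (ρ (s, a) / ∑ a', ρ (s, a')))
    (hcov : ∀ y, d y ≤ κ * ρ y) (hcovS : ∀ s, ∑ a, d (s, a) ≤ κS * ∑ a, ρ (s, a))
    {m : S × A → ℝ} {b : ℝ} (hb : 0 ≤ b) (hm : ∀ y, |m y| ≤ b * d y) (y : S × A) :
    |oneSubPolicyProjTranspose μ m y| ≤ b * (κ + κμ * κS) * ρ y := by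
  obtain ⟨s, a⟩ := y
  have hsum : |∑ a', m (s, a')| ≤ b * ∑ a', d (s, a') := by
    rw [Finset.mul_sum]
    exact (Finset.abs_sum_le_sum_abs _ _).trans (Finset.sum_le_sum fun a' _ => hm (s, a'))
  have hfirst : |m (s, a)| ≤ b * (κ * ρ (s, a)) :=
    (hm (s, a)).trans (mul_le_mul_of_nonneg_left (hcov (s, a)) hb)
  have hsecond : μ s a * |∑ a', m (s, a')| ≤ b * (κμ * κS * ρ (s, a)) := calc
    _ ≤ μ s a * (b * ∑ a', d (s, a')) := mul_le_mul_of_nonneg_left hsum (hμ0 s a)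
    _ = b * (μ s a * ∑ a', d (s, a')) := by ring
    _ ≤ b * (κμ * κS * ρ (s, a)) :=
      mul_le_mul_of_nonneg_left (policy_mul_marginal_le hρ hd hμ0 hμcov hcovS s a) hb
  calc |m (s, a) - μ s a * ∑ a', m (s, a')|
      ≤ |m (s, a)| + |μ s a * ∑ a', m (s, a')| := abs_sub _ _
    _ = |m (s, a)| + μ s a * |∑ a', m (s, a')| := by rw [abs_mul, abs_of_nonneg (hμ0 s a)]
    _ ≤ b * (κ * ρ (s, a)) + b * (κμ * κS * ρ (s, a)) := add_le_add hfirst hsecond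
    _ = b * (κ + κμ * κS) * ρ (s, a) := by ring

end PolicyProjection

theorem stmt_7_general {S A : Type*} [Fintype S] [Fintype A]
    [DecidableEq S] [DecidableEq A]
    (ρ₁ ρ₂ : S × A → ℝ)
    (hρ₁pos : ∀ x, 0 < ρ₁ x)
    (hρ₂pos : ∀ x, 0 < ρ₂ x)
    (γ₁ γ₂ : ℝ) (hγ₁0 : 0 ≤ γ₁) (hγ₁1 : γ₁ < 1) (hγ₂0 : 0 ≤ γ₂) (hγ₂1 : γ₂ < 1)
    (P₁ M : Matrix (S × A) (S × A) ℝ)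
    (hP₁0 : ∀ x y, 0 ≤ P₁ x y) (hP₁1 : ∀ x, ∑ y, P₁ x y = 1)
    (hM0 : ∀ x y, 0 ≤ M x y) (hM1 : ∀ x, ∑ y, M x y = 1)
    (μ : S → A → ℝ) (hμ0 : ∀ s a, 0 ≤ μ s a)
    (q₂s : S × A → ℝ) (B : ℝ) (hB : ∀ x, |q₂s x| ≤ B)
    (κ₁ κ₁₂ κ₁₂S κμ : ℝ)
    (d₁ d₂ : S × A → ℝ)
    (hd₁ : ∀ x, d₁ x = (1 - γ₁) * ∑' t : ℕ, γ₁ ^ t * ((P₁ᵀ ^ t) *ᵥ ρ₁) x)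
    (hd₂ : ∀ x, d₂ x = (1 - γ₂) * ∑' t : ℕ, γ₂ ^ t * ((Mᵀ ^ t) *ᵥ ρ₂) x)
    (hcov₁ : ∀ x, d₁ x ≤ κ₁ * ρ₁ x)
    (hcov₁₂ : ∀ x, d₂ x ≤ κ₁₂ * ρ₁ x)
    (hcov₁₂S : ∀ s, (∑ a, d₂ (s, a)) ≤ κ₁₂S * ∑ a, ρ₁ (s, a))
    (hμcov : ∀ s a, μ s a ≤ κμ * (ρ₁ (s, a) / ∑ a', ρ₁ (s, a')))
    (l₂s lcross : S × A → ℝ)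
    (hl₂s : ∀ x, l₂s x =
      (((1 : Matrix (S × A) (S × A) ℝ) - γ₂ • Mᵀ)⁻¹ *ᵥ fun y => ρ₂ y * q₂s y) x / ρ₂ x)
    (hlcross : ∀ x, lcross x =
      (((1 : Matrix (S × A) (S × A) ℝ) - γ₁ • P₁ᵀ)⁻¹ *ᵥ fun y =>
          ρ₂ y * l₂s y - μ y.1 y.2 * ∑ a', ρ₂ (y.1, a') * l₂s (y.1, a')) x / ρ₁ x) :
    ∀ x, |lcross x| ≤ κ₁ * (κ₁₂ + κμ * κ₁₂S) * B / ((1 - γ₁) * (1 - γ₂)) := by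
  intro x
  have hP₁ : P₁ ∈ rowStochastic ℝ (S × A) := mem_rowStochastic_iff_sum.2 ⟨hP₁0, hP₁1⟩
  have hM : M ∈ rowStochastic ℝ (S × A) := mem_rowStochastic_iff_sum.2 ⟨hM0, hM1⟩
  have hl₂ : ∀ y, |ρ₂ y * l₂s y| ≤ B / (1 - γ₂) * d₂ y := fun y => by
    rw [hl₂s y, mul_div_cancel₀ _ (hρ₂pos y).ne']
    refine (abs_inv_one_sub_smul_transpose_mulVec_le hM hγ₂0 hγ₂1 hd₂ (c := B) (fun z => ?_) y).trans_eq
      (by ring)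
    rw [abs_mul, abs_of_pos (hρ₂pos z), mul_comm]
    exact mul_le_mul_of_nonneg_right (hB z) (hρ₂pos z).le
  have hsource := abs_oneSubPolicyProjTranspose_le hρ₁pos
    (occupancy_nonneg hM hγ₂0 hγ₂1 (fun y => (hρ₂pos y).le) hd₂) hμ0 hμcov hcov₁₂ hcov₁₂S
    (div_nonneg ((abs_nonneg _).trans (hB x)) (by linarith)) hl₂
  set C := B / (1 - γ₂) * (κ₁₂ + κμ * κ₁₂S) with hC_def
  have hC : 0 ≤ C := nonneg_of_mul_nonneg_left ((abs_nonneg _).trans (hsource x)) (hρ₁pos x)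
  rw [hlcross x, abs_div, abs_of_pos (hρ₁pos x), div_le_iff₀ (hρ₁pos x)]
  calc _ ≤ C * d₁ x / (1 - γ₁) :=
        abs_inv_one_sub_smul_transpose_mulVec_le hP₁ hγ₁0 hγ₁1 hd₁ hsource x
    _ ≤ C * (κ₁ * ρ₁ x) / (1 - γ₁) :=
        div_le_div_of_nonneg_right (mul_le_mul_of_nonneg_left (hcov₁ x) hC) (by linarith)
    _ = κ₁ * (κ₁₂ + κμ * κ₁₂S) * B / ((1 - γ₁) * (1 - γ₂)) * ρ₁ x := by
        rw [hC_def]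
        field_simp

/-- Cross-term dual boundedness (Proposition 'Dual representations and
boundedness'): under the coverage assumptions, the cross-environment source
dual `l_{1,cross} = ((I - γ₁ (P₁^μ)ᵀ)⁻¹ (I - Π_μ)ᵀ (ρ₂ ⊙ l₂*)) / ρ₁` satisfies
`|l_{1,cross}| ≤ κ₁ (κ₁₂ + κ_{μ|b1} κ₁₂^S) B / ((1-γ₁)(1-γ₂))`. -/
theorem stmt_7 {S A : Type*} [Fintype S] [Fintype A] [Nonempty S] [Nonempty A]
    [DecidableEq S] [DecidableEq A]
    (ρ₁ ρ₂ : S × A → ℝ)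
    (hρ₁pos : ∀ x, 0 < ρ₁ x) (hρ₁1 : ∑ x, ρ₁ x = 1)
    (hρ₂pos : ∀ x, 0 < ρ₂ x) (hρ₂1 : ∑ x, ρ₂ x = 1)
    (γ₁ γ₂ : ℝ) (hγ₁0 : 0 ≤ γ₁) (hγ₁1 : γ₁ < 1) (hγ₂0 : 0 ≤ γ₂) (hγ₂1 : γ₂ < 1)
    (P₁ M : Matrix (S × A) (S × A) ℝ)
    (hP₁0 : ∀ x y, 0 ≤ P₁ x y) (hP₁1 : ∀ x, ∑ y, P₁ x y = 1)
    (hM0 : ∀ x y, 0 ≤ M x y) (hM1 : ∀ x, ∑ y, M x y = 1)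
    (μ : S → A → ℝ) (hμ0 : ∀ s a, 0 ≤ μ s a) (hμ1 : ∀ s, ∑ a, μ s a = 1)
    (q₂s : S × A → ℝ) (B : ℝ) (hB : ∀ x, |q₂s x| ≤ B)
    (κ₁ κ₁₂ κ₁₂S κμ : ℝ)
    (d₁ d₂ : S × A → ℝ)
    (hd₁ : ∀ x, d₁ x = (1 - γ₁) * ∑' t : ℕ, γ₁ ^ t * ((P₁ᵀ ^ t) *ᵥ ρ₁) x)
    (hd₂ : ∀ x, d₂ x = (1 - γ₂) * ∑' t : ℕ, γ₂ ^ t * ((Mᵀ ^ t) *ᵥ ρ₂) x)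
    (hcov₁ : ∀ x, d₁ x ≤ κ₁ * ρ₁ x)
    (hcov₁₂ : ∀ x, d₂ x ≤ κ₁₂ * ρ₁ x)
    (hcov₁₂S : ∀ s, (∑ a, d₂ (s, a)) ≤ κ₁₂S * ∑ a, ρ₁ (s, a))
    (hμcov : ∀ s a, μ s a ≤ κμ * (ρ₁ (s, a) / ∑ a', ρ₁ (s, a')))
    (l₂s lcross : S × A → ℝ)
    (hl₂s : ∀ x, l₂s x =
      (((1 : Matrix (S × A) (S × A) ℝ) - γ₂ • Mᵀ)⁻¹ *ᵥ fun y => ρ₂ y * q₂s y) x / ρ₂ x)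
    (hlcross : ∀ x, lcross x =
      (((1 : Matrix (S × A) (S × A) ℝ) - γ₁ • P₁ᵀ)⁻¹ *ᵥ fun y =>
          ρ₂ y * l₂s y - μ y.1 y.2 * ∑ a', ρ₂ (y.1, a') * l₂s (y.1, a')) x / ρ₁ x) :
    ∀ x, |lcross x| ≤ κ₁ * (κ₁₂ + κμ * κ₁₂S) * B / ((1 - γ₁) * (1 - γ₂)) :=
  stmt_7_general ρ₁ ρ₂ hρ₁pos hρ₂pos γ₁ γ₂ hγ₁0 hγ₁1 hγ₂0 hγ₂1 P₁ M hP₁0 hP₁1 hM0 hM1 μ hμ0 q₂s B hB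
    κ₁ κ₁₂ κ₁₂S κμ d₁ d₂ hd₁ hd₂ hcov₁ hcov₁₂ hcov₁₂S hμcov l₂s lcross hl₂s hlcross
end

section
/- Suppose the matrix I − γ₁·P₁^μ on ℝ^{S×A} is invertible. Define the residuals b₁(q₁) = u + γ₁·P₁^μ q₁ − q₁ and b₂(q₁, q₂) = (q₁ − Π_μ q₁) + w + γ₂·P₂ Ω(q₂) − q₂, and the profiled target residual b̃₂(q₁, q₂) = b₂(q₁, q₂) + (I − Π_μ)(I − γ₁·P₁^μ)⁻¹ b₁(q₁). Then b̃₂ does not depend on q₁: for all q₁, q₁', q₂ one has b̃₂(q₁, q₂) = b̃₂(q₁', q₂), and explicitly b̃₂(q₁, q₂) = w + γ₂·P₂ Ω(q₂) − q₂ + (I − Π_μ)(I − γ₁·P₁^μ)⁻¹ u. In particular the derivative of b̃₂ with respect to q₁ vanishes identically. -/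
open Matrix BigOperators

namespace Stmt10

variable {S A : Type*} [Fintype S] [Fintype A] [DecidableEq S] [DecidableEq A]

/-- Soft value operator `Ω(q)(s) = τ₂ log ∑_a π_ref(a|s) exp(q(s,a)/τ₂)`. -/
noncomputable def Omega (τ₂ : ℝ) (πref : S → A → ℝ) (q : S × A → ℝ) (s : S) : ℝ :=
  τ₂ * Real.log (∑ a, πref s a * Real.exp (q (s, a) / τ₂))

/-- Anchor averaging operator `(Π_μ q)(s,a) = ∑_{a'} μ(a'|s) q(s,a')`. -/
def Pimu (μ : S → A → ℝ) (q : S × A → ℝ) (x : S × A) : ℝ :=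
  ∑ a', μ x.1 a' * q (x.1, a')

/-- Source residual `b₁(q₁) = u + γ₁ P₁^μ q₁ - q₁`. -/
def b1 (P₁ : Matrix (S × A) (S × A) ℝ) (γ₁ : ℝ) (u q₁ : S × A → ℝ) (x : S × A) : ℝ :=
  u x + γ₁ * ∑ y, P₁ x y * q₁ y - q₁ x

/-- Target residual `b₂(q₁,q₂) = (I - Π_μ)q₁ + w + γ₂ P₂ Ω(q₂) - q₂`. -/
noncomputable def b2 (P₂ : S → A → S → ℝ) (μ πref : S → A → ℝ) (τ₂ γ₂ : ℝ)
    (w q₁ q₂ : S × A → ℝ) (x : S × A) : ℝ :=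
  (q₁ x - Pimu μ q₁ x) + w x + γ₂ * ∑ s', P₂ x.1 x.2 s' * Omega τ₂ πref q₂ s' - q₂ x

/-- Profiled target residual
`b̃₂(q₁,q₂) = b₂(q₁,q₂) + (I − Π_μ)(I − γ₁ P₁^μ)⁻¹ b₁(q₁)`. -/
noncomputable def btilde (P₁ : Matrix (S × A) (S × A) ℝ) (P₂ : S → A → S → ℝ)
    (μ πref : S → A → ℝ) (τ₂ γ₁ γ₂ : ℝ) (u w : S × A → ℝ)
    (q₁ q₂ : S × A → ℝ) (x : S × A) : ℝ :=
  b2 P₂ μ πref τ₂ γ₂ w q₁ q₂ x +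
    ((((1 : Matrix (S × A) (S × A) ℝ) - γ₁ • P₁)⁻¹ *ᵥ b1 P₁ γ₁ u q₁) x -
      Pimu μ (((1 : Matrix (S × A) (S × A) ℝ) - γ₁ • P₁)⁻¹ *ᵥ b1 P₁ γ₁ u q₁) x)

end Stmt10

open Stmt10

/-- Corollary (Explicit orthogonalized target residual): the profiled target
residual `b̃₂` does not depend on `q₁`, admits the explicit formula
`b̃₂(q₁,q₂) = w + γ₂ P₂ Ω(q₂) − q₂ + (I − Π_μ)(I − γ₁ P₁^μ)⁻¹ u`, and its
derivative with respect to `q₁` vanishes identically. -/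
theorem stmt_10 {S A : Type*} [Fintype S] [Fintype A] [Nonempty S] [Nonempty A]
    [DecidableEq S] [DecidableEq A]
    (P₁ : Matrix (S × A) (S × A) ℝ) (hP₁0 : ∀ x y, 0 ≤ P₁ x y) (hP₁1 : ∀ x, ∑ y, P₁ x y = 1)
    (P₂ : S → A → S → ℝ) (hP₂0 : ∀ s a s', 0 ≤ P₂ s a s') (hP₂1 : ∀ s a, ∑ s', P₂ s a s' = 1)
    (μ : S → A → ℝ) (hμ0 : ∀ s a, 0 ≤ μ s a) (hμ1 : ∀ s, ∑ a, μ s a = 1)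
    (τ₂ : ℝ) (hτ₂ : 0 < τ₂)
    (πref : S → A → ℝ) (hπref0 : ∀ s a, 0 < πref s a) (hπref1 : ∀ s, ∑ a, πref s a = 1)
    (γ₁ γ₂ : ℝ) (hγ₁0 : 0 ≤ γ₁) (hγ₁1 : γ₁ < 1) (hγ₂0 : 0 ≤ γ₂) (hγ₂1 : γ₂ < 1)
    (u w : S × A → ℝ)
    (hinv : IsUnit ((1 : Matrix (S × A) (S × A) ℝ) - γ₁ • P₁)) :
    (∀ q₁ q₁' q₂ : S × A → ℝ,
        btilde P₁ P₂ μ πref τ₂ γ₁ γ₂ u w q₁ q₂ =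
          btilde P₁ P₂ μ πref τ₂ γ₁ γ₂ u w q₁' q₂) ∧
    (∀ q₁ q₂ : S × A → ℝ, ∀ x : S × A,
        btilde P₁ P₂ μ πref τ₂ γ₁ γ₂ u w q₁ q₂ x =
          w x + γ₂ * ∑ s', P₂ x.1 x.2 s' * Omega τ₂ πref q₂ s' - q₂ x +
            ((((1 : Matrix (S × A) (S × A) ℝ) - γ₁ • P₁)⁻¹ *ᵥ u) x -
              Pimu μ (((1 : Matrix (S × A) (S × A) ℝ) - γ₁ • P₁)⁻¹ *ᵥ u) x)) ∧
    (∀ q₂ q₁ : S × A → ℝ,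
        fderiv ℝ (fun q₁' => btilde P₁ P₂ μ πref τ₂ γ₁ γ₂ u w q₁' q₂) q₁ = 0) := by
  set M : Matrix (S × A) (S × A) ℝ := (1 : Matrix (S × A) (S × A) ℝ) - γ₁ • P₁ with hM
  have hdet : IsUnit M.det := (Matrix.isUnit_iff_isUnit_det M).mp hinv
  have hb1 : ∀ q₁ : S × A → ℝ, b1 P₁ γ₁ u q₁ = u - M *ᵥ q₁ := by
    intro q₁
    funext x
    simp [b1, hM, Matrix.sub_mulVec, Matrix.smul_mulVec, Matrix.mulVec, dotProduct,
      Finset.mul_sum]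
    ring
  have hkey : ∀ q₁ : S × A → ℝ, M⁻¹ *ᵥ b1 P₁ γ₁ u q₁ = M⁻¹ *ᵥ u - q₁ := by
    intro q₁
    rw [hb1, Matrix.mulVec_sub, Matrix.mulVec_mulVec, Matrix.nonsing_inv_mul M hdet,
      Matrix.one_mulVec]
  have hPimu_sub : ∀ (f g : S × A → ℝ) (x : S × A),
      Pimu μ (f - g) x = Pimu μ f x - Pimu μ g x := by
    intro f g x
    simp [Pimu, mul_sub, Finset.sum_sub_distrib]
  have hform : ∀ q₁ q₂ : S × A → ℝ, ∀ x : S × A,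
      btilde P₁ P₂ μ πref τ₂ γ₁ γ₂ u w q₁ q₂ x =
        w x + γ₂ * ∑ s', P₂ x.1 x.2 s' * Omega τ₂ πref q₂ s' - q₂ x +
          ((M⁻¹ *ᵥ u) x - Pimu μ (M⁻¹ *ᵥ u) x) := by
    intro q₁ q₂ x
    have h1 := hkey q₁
    simp only [btilde, b2, ← hM, h1, hPimu_sub]
    simp [Pi.sub_apply]
    ring
  refine ⟨?_, ?_, ?_⟩
  · intro q₁ q₁' q₂
    funext x
    rw [hform q₁ q₂ x, hform q₁' q₂ x]
  · intro q₁ q₂ x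
    exact hform q₁ q₂ x
  · intro q₂ q₁
    have : (fun q₁' => btilde P₁ P₂ μ πref τ₂ γ₁ γ₂ u w q₁' q₂) =
        fun _ => btilde P₁ P₂ μ πref τ₂ γ₁ γ₂ u w q₁ q₂ := by
      funext q₁' 
      funext x
      rw [hform q₁' q₂ x, hform q₁ q₂ x]
    rw [this]
    exact fderiv_const_apply _
end

section
/- Let X be a nonempty finite set, let P and P̂ be matrices on ℝ^X, let γ ∈ ℝ, and let q* : X → ℝ. Set u = (I − γ·P) q*, and suppose I − γ·P̂ is invertible. Then for every q̂ : X → ℝ, writing b̂ = u + γ·P̂ q̂ − q̂ for the empirical residual, one has the exact decomposition q̂ − q* = γ·(I − γ·P̂)⁻¹ (P̂ − P) q* − (I − γ·P̂)⁻¹ b̂. -/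
/-!
Multiplying `q̂ - q*` by `I - γP̂` and substituting `u = (I - γP)q*` gives
`(I - γP̂)(q̂ - q*) = γ(P̂ - P)q* - b̂`; applying `(I - γP̂)⁻¹` yields the decomposition.
-/

open Matrix

namespace Matrix

variable {n R : Type*} [Fintype n] [DecidableEq n] [CommRing R]

theorem nonsing_inv_mulVec_mulVec_of_isUnit {A : Matrix n n R} (hA : IsUnit A) (v : n → R) :
    A⁻¹ *ᵥ (A *ᵥ v) = v := by
  rw [mulVec_mulVec, nonsing_inv_mul A ((isUnit_iff_isUnit_det A).mp hA), one_mulVec]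

theorem one_sub_smul_mulVec_sub_eq (P Phat : Matrix n n R) (γ : R) (qstar qhat : n → R) :
    (1 - γ • Phat) *ᵥ (qhat - qstar) =
      γ • ((Phat - P) *ᵥ qstar) - ((1 - γ • P) *ᵥ qstar + γ • (Phat *ᵥ qhat) - qhat) := by
  simp only [sub_mulVec, smul_mulVec, one_mulVec, mulVec_sub]
  module

end Matrix

theorem stmt_11_general {X : Type*} [Fintype X] [DecidableEq X]
    (P Phat : Matrix X X ℝ) (γ : ℝ) (qstar : X → ℝ)
    (u : X → ℝ) (hu : u = ((1 : Matrix X X ℝ) - γ • P) *ᵥ qstar)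
    (hinv : IsUnit ((1 : Matrix X X ℝ) - γ • Phat)) :
    ∀ qhat : X → ℝ,
      qhat - qstar =
        γ • (((1 : Matrix X X ℝ) - γ • Phat)⁻¹ *ᵥ ((Phat - P) *ᵥ qstar)) -
          ((1 : Matrix X X ℝ) - γ • Phat)⁻¹ *ᵥ (u + γ • (Phat *ᵥ qhat) - qhat) := by
  intro qhat
  subst hu
  rw [← nonsing_inv_mulVec_mulVec_of_isUnit hinv (qhat - qstar),
    one_sub_smul_mulVec_sub_eq P Phat γ qstar qhat, mulVec_sub, mulVec_smul]

/-- Lemma (Source error decomposition): if `u = (I − γP)q*` and `I − γP̂` is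
invertible, then for every `q̂` with empirical residual `b̂ = u + γ P̂ q̂ − q̂`,
`q̂ − q* = γ (I − γP̂)⁻¹ (P̂ − P) q* − (I − γP̂)⁻¹ b̂`. -/
theorem stmt_11 {X : Type*} [Fintype X] [Nonempty X] [DecidableEq X]
    (P Phat : Matrix X X ℝ) (γ : ℝ) (qstar : X → ℝ)
    (u : X → ℝ) (hu : u = ((1 : Matrix X X ℝ) - γ • P) *ᵥ qstar)
    (hinv : IsUnit ((1 : Matrix X X ℝ) - γ • Phat)) :
    ∀ qhat : X → ℝ,
      qhat - qstar =
        γ • (((1 : Matrix X X ℝ) - γ • Phat)⁻¹ *ᵥ ((Phat - P) *ᵥ qstar)) -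
          ((1 : Matrix X X ℝ) - γ • Phat)⁻¹ *ᵥ (u + γ • (Phat *ᵥ qhat) - qhat) :=
  stmt_11_general P Phat γ qstar u hu hinv
end

section
/- Let X be a nonempty finite set, K a row-stochastic matrix on X, γ ∈ [0,1), and ρ a probability weight on X. Let d = (1−γ)·∑_{t≥0} γ^t (Kᵀ)^t ρ be the discounted occupancy and assume d(x) ≤ κ·ρ(x) for all x. Then I − γ·K is invertible and for every f : X → ℝ, ∑_x ρ(x)·((I − γ·K)⁻¹ f)(x)² ≤ (κ/(1−γ)²)·∑_x ρ(x)·f(x)², i.e. ‖(I − γ·K)⁻¹ f‖_ρ ≤ (√κ/(1−γ))·‖f‖_ρ. -/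
/-!
Write `A = 1 - γ K` and `g = A⁻¹ f`, so that `g = f + γ K g`. Convexity of the square together
with Jensen's inequality for the stochastic matrix `K` makes `g²` a subsolution:
`A (g²) ≤ f² / (1 - γ)` pointwise. The discounted visitation `ν = ∑ γᵗ (Kᵀ)ᵗ ρ = d / (1 - γ)` is
nonnegative and solves the balance equation `Aᵀ ν = ρ`, hence
`⟪ρ, g²⟫ = ⟪ν, A (g²)⟫ ≤ ⟪ν, f²⟫ / (1 - γ) ≤ κ ⟪ρ, f²⟫ / (1 - γ)²`.
Invertibility of `A` is strict diagonal dominance.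
-/

open Matrix BigOperators Finset

theorem Matrix.one_sub_mulVec_tsum_pow_mulVec {R n : Type*} [CommRing R] [TopologicalSpace R]
    [IsTopologicalRing R] [T2Space R] [Fintype n] [DecidableEq n] {Q : Matrix n n R}
    {v : n → R} (h : Summable fun t : ℕ => (Q ^ t) *ᵥ v) :
    (1 - Q) *ᵥ ∑' t, (Q ^ t) *ᵥ v = v := by
  have hQ : Q *ᵥ ∑' t, (Q ^ t) *ᵥ v = ∑' t, (Q ^ (t + 1)) *ᵥ v := by
    simpa [mulVec_mulVec, pow_succ'] using
      h.map_tsum Q.mulVecLin (continuous_const.matrix_mulVec continuous_id)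
  rw [sub_mulVec, one_mulVec, hQ, h.tsum_eq_zero_add]
  simp

theorem Matrix.dotProduct_le_of_transpose_mulVec_eq {R n : Type*} [CommRing R] [PartialOrder R]
    [IsOrderedRing R] [Fintype n] {A : Matrix n n R} {ν ρ u w : n → R} (hν : 0 ≤ ν)
    (hAν : Aᵀ *ᵥ ν = ρ) (hu : A *ᵥ u ≤ w) : ρ ⬝ᵥ u ≤ ν ⬝ᵥ w := by
  rw [← hAν, mulVec_transpose, ← dotProduct_mulVec]
  exact dotProduct_le_dotProduct_of_nonneg_left hu hν

theorem Matrix.sq_mulVec_le_mulVec_sq_of_mem_rowStochastic {R n : Type*} [CommRing R]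
    [LinearOrder R] [IsStrictOrderedRing R] [Fintype n] [DecidableEq n] {M : Matrix n n R}
    (hM : M ∈ rowStochastic R n) (g : n → R) (x : n) :
    (M *ᵥ g) x ^ 2 ≤ (M *ᵥ fun y => g y ^ 2) x := by
  have := sum_sq_le_sum_mul_sum_of_sq_le_mul univ (r := fun y => M x y * g y)
    (fun y _ => nonneg_of_mem_rowStochastic hM (i := x) (j := y))
    (fun y _ => mul_nonneg (nonneg_of_mem_rowStochastic hM) (sq_nonneg (g y)))
    (fun y _ => (by ring : (M x y * g y) ^ 2 = M x y * (M x y * g y ^ 2)).le)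
  rwa [sum_row_of_mem_rowStochastic hM, one_mul] at this

section Discounted

variable {X : Type*} [Fintype X] [DecidableEq X] {K : Matrix X X ℝ} {γ : ℝ}

theorem Matrix.vecMul_apply_le_sum_of_mem_rowStochastic {M : Matrix X X ℝ}
    (hM : M ∈ rowStochastic ℝ X) {ρ : X → ℝ} (hρ : 0 ≤ ρ) (y : X) : (ρ ᵥ* M) y ≤ ∑ x, ρ x :=
  sum_le_sum fun x _ => mul_le_of_le_one_right (hρ x) (le_one_of_mem_rowStochastic hM)

theorem Matrix.smul_pow_mulVec_apply (P : Matrix X X ℝ) (ρ : X → ℝ) (t : ℕ) (y : X) :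
    ((γ • P) ^ t *ᵥ ρ) y = γ ^ t * (P ^ t *ᵥ ρ) y := by
  rw [smul_pow, smul_mulVec, Pi.smul_apply, smul_eq_mul]

theorem Matrix.smul_transpose_pow_mulVec_apply_mem_Icc (hK : K ∈ rowStochastic ℝ X)
    (hγ0 : 0 ≤ γ) {ρ : X → ℝ} (hρ : 0 ≤ ρ) (t : ℕ) (y : X) :
    ((γ • Kᵀ) ^ t *ᵥ ρ) y ∈ Set.Icc 0 (γ ^ t * ∑ x, ρ x) := by
  rw [smul_pow_mulVec_apply, ← transpose_pow, mulVec_transpose]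
  exact ⟨mul_nonneg (pow_nonneg hγ0 t) (nonneg_vecMul_of_mem_rowStochastic (pow_mem hK t) hρ y),
    mul_le_mul_of_nonneg_left (vecMul_apply_le_sum_of_mem_rowStochastic (pow_mem hK t) hρ y)
      (pow_nonneg hγ0 t)⟩

theorem Matrix.summable_smul_transpose_pow_mulVec (hK : K ∈ rowStochastic ℝ X) (hγ0 : 0 ≤ γ)
    (hγ1 : γ < 1) {ρ : X → ℝ} (hρ : 0 ≤ ρ) : Summable fun t : ℕ => (γ • Kᵀ) ^ t *ᵥ ρ :=
  Pi.summable.2 fun y => Summable.of_nonneg_of_le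
    (fun t => (smul_transpose_pow_mulVec_apply_mem_Icc hK hγ0 hρ t y).1)
    (fun t => (smul_transpose_pow_mulVec_apply_mem_Icc hK hγ0 hρ t y).2)
    ((summable_geometric_of_lt_one hγ0 hγ1).mul_right _)

theorem Matrix.isUnit_one_sub_smul_of_mem_rowStochastic (hK : K ∈ rowStochastic ℝ X)
    (hγ0 : 0 ≤ γ) (hγ1 : γ < 1) : IsUnit (1 - γ • K) := by
  rw [isUnit_iff_isUnit_det, isUnit_iff_ne_zero]
  refine det_ne_zero_of_sum_row_lt_diag fun k => ?_
  have hoff : ∀ j ∈ univ.erase k, ‖(1 - γ • K) k j‖ = γ * K k j := fun j hj => by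
    simp [one_apply_ne' (ne_of_mem_erase hj), abs_of_nonneg, hγ0, nonneg_of_mem_rowStochastic hK]
  have hdiag : γ * K k k < 1 := by nlinarith [le_one_of_mem_rowStochastic hK (i := k) (j := k)]
  calc ∑ j ∈ univ.erase k, ‖(1 - γ • K) k j‖ = γ * (1 - K k k) := by
        rw [sum_congr rfl hoff, ← mul_sum, sum_erase_eq_sub (mem_univ k),
          sum_row_of_mem_rowStochastic hK]
    _ < 1 - γ * K k k := by linarith
    _ = ‖(1 - γ • K) k k‖ := by simp [abs_of_pos (sub_pos.2 hdiag)]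

-- The gap is `γ (a - (1 - γ) c)² / (1 - γ)`.
theorem add_mul_sq_le_div_one_sub_add (hγ0 : 0 ≤ γ) (hγ1 : γ < 1) (a c : ℝ) :
    (a + γ * c) ^ 2 ≤ a ^ 2 / (1 - γ) + γ * c ^ 2 := by
  have h1γ : 0 < 1 - γ := sub_pos.2 hγ1
  rw [div_add' _ _ _ h1γ.ne', le_div_iff₀ h1γ]
  nlinarith [mul_nonneg hγ0 (sq_nonneg (a - (1 - γ) * c))]

theorem Matrix.one_sub_smul_mulVec_sq_le (hK : K ∈ rowStochastic ℝ X) (hγ0 : 0 ≤ γ)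
    (hγ1 : γ < 1) {f g : X → ℝ} (hg : (1 - γ • K) *ᵥ g = f) :
    (1 - γ • K) *ᵥ (fun x => g x ^ 2) ≤ (1 - γ)⁻¹ • fun x => f x ^ 2 := by
  intro x
  have hgx : g x = f x + γ * (K *ᵥ g) x := by
    rw [← hg]
    simp [sub_mulVec, smul_mulVec]
  have hJensen :=
    mul_le_mul_of_nonneg_left (sq_mulVec_le_mulVec_sq_of_mem_rowStochastic hK g x) hγ0
  have hconvex := add_mul_sq_le_div_one_sub_add hγ0 hγ1 (f x) ((K *ᵥ g) x)
  simp only [sub_mulVec, one_mulVec, smul_mulVec, Pi.sub_apply, Pi.smul_apply, smul_eq_mul]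
  rw [hgx]
  linarith [div_eq_inv_mul (f x ^ 2) (1 - γ)]

theorem Matrix.sum_mul_inv_one_sub_smul_mulVec_sq_le (hK : K ∈ rowStochastic ℝ X)
    (hγ0 : 0 ≤ γ) (hγ1 : γ < 1) {ρ ν : X → ℝ} {κ : ℝ} (hν0 : 0 ≤ ν)
    (hbal : (1 - γ • K)ᵀ *ᵥ ν = ρ) (hνρ : ∀ x, (1 - γ) * ν x ≤ κ * ρ x) (f : X → ℝ) :
    ∑ x, ρ x * (((1 - γ • K)⁻¹ *ᵥ f) x) ^ 2 ≤ κ / (1 - γ) ^ 2 * ∑ x, ρ x * f x ^ 2 := by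
  have hdet := (isUnit_iff_isUnit_det _).1 (isUnit_one_sub_smul_of_mem_rowStochastic hK hγ0 hγ1)
  have hg : (1 - γ • K) *ᵥ ((1 - γ • K)⁻¹ *ᵥ f) = f := by
    rw [mulVec_mulVec, mul_nonsing_inv _ hdet, one_mulVec]
  calc _ ≤ ν ⬝ᵥ (1 - γ)⁻¹ • fun x => f x ^ 2 :=
        dotProduct_le_of_transpose_mulVec_eq hν0 hbal (one_sub_smul_mulVec_sq_le hK hγ0 hγ1 hg)
    _ ≤ _ := by
      rw [mul_sum]
      refine sum_le_sum fun x _ => ?_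
      have h1γ : 0 < 1 - γ := sub_pos.2 hγ1
      calc ν x * ((1 - γ)⁻¹ * f x ^ 2) = (1 - γ) * ν x * (f x ^ 2 / (1 - γ) ^ 2) := by
            field_simp
        _ ≤ κ * ρ x * (f x ^ 2 / (1 - γ) ^ 2) :=
            mul_le_mul_of_nonneg_right (hνρ x) (by positivity)
        _ = κ / (1 - γ) ^ 2 * (ρ x * f x ^ 2) := by ring

end Discounted

theorem stmt_12_general {X : Type*} [Fintype X] [DecidableEq X]
    (K : Matrix X X ℝ) (hK0 : ∀ x y, 0 ≤ K x y) (hK1 : ∀ x, ∑ y, K x y = 1)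
    (γ : ℝ) (hγ0 : 0 ≤ γ) (hγ1 : γ < 1)
    (ρ : X → ℝ) (hρ0 : ∀ x, 0 ≤ ρ x)
    (κ : ℝ) (d : X → ℝ)
    (hd : ∀ x, d x = (1 - γ) * ∑' t : ℕ, γ ^ t * ((Kᵀ ^ t) *ᵥ ρ) x)
    (hcov : ∀ x, d x ≤ κ * ρ x) :
    IsUnit ((1 : Matrix X X ℝ) - γ • K) ∧
      (∀ f : X → ℝ,
        ∑ x, ρ x * ((((1 : Matrix X X ℝ) - γ • K)⁻¹ *ᵥ f) x) ^ 2 ≤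
          κ / (1 - γ) ^ 2 * ∑ x, ρ x * f x ^ 2) ∧
      (∀ f : X → ℝ,
        Real.sqrt (∑ x, ρ x * ((((1 : Matrix X X ℝ) - γ • K)⁻¹ *ᵥ f) x) ^ 2) ≤
          Real.sqrt κ / (1 - γ) * Real.sqrt (∑ x, ρ x * f x ^ 2)) := by
  have hK : K ∈ rowStochastic ℝ X := mem_rowStochastic_iff_sum.2 ⟨hK0, hK1⟩
  have hsum := summable_smul_transpose_pow_mulVec hK hγ0 hγ1 hρ0
  have hν0 : 0 ≤ ∑' t : ℕ, (γ • Kᵀ) ^ t *ᵥ ρ :=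
    tsum_nonneg fun t y => (smul_transpose_pow_mulVec_apply_mem_Icc hK hγ0 hρ0 t y).1
  have hbal : (1 - γ • K)ᵀ *ᵥ ∑' t : ℕ, (γ • Kᵀ) ^ t *ᵥ ρ = ρ := by
    rw [transpose_sub, transpose_one, transpose_smul]
    exact one_sub_mulVec_tsum_pow_mulVec hsum
  have hνρ : ∀ x, (1 - γ) * (∑' t : ℕ, (γ • Kᵀ) ^ t *ᵥ ρ) x ≤ κ * ρ x := fun x => by
    simpa only [tsum_apply hsum, smul_pow_mulVec_apply, ← hd] using hcov x
  have hbound := sum_mul_inv_one_sub_smul_mulVec_sq_le hK hγ0 hγ1 hν0 hbal hνρ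
  refine ⟨isUnit_one_sub_smul_of_mem_rowStochastic hK hγ0 hγ1, hbound, fun f => ?_⟩
  refine (Real.sqrt_le_sqrt (hbound f)).trans_eq ?_
  rw [Real.sqrt_mul' _ (sum_nonneg fun x _ => mul_nonneg (hρ0 x) (sq_nonneg _)),
    Real.sqrt_div' _ (sq_nonneg _), Real.sqrt_sq (sub_pos.2 hγ1).le]

/-- Lemma (Discounted resolvent stability under concentrability): if the
discounted occupancy satisfies `d ≤ κ ρ`, then `I − γK` is invertible and
`‖(I − γK)⁻¹ f‖_ρ ≤ (√κ/(1−γ)) ‖f‖_ρ` for every `f`. -/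
theorem stmt_12 {X : Type*} [Fintype X] [Nonempty X] [DecidableEq X]
    (K : Matrix X X ℝ) (hK0 : ∀ x y, 0 ≤ K x y) (hK1 : ∀ x, ∑ y, K x y = 1)
    (γ : ℝ) (hγ0 : 0 ≤ γ) (hγ1 : γ < 1)
    (ρ : X → ℝ) (hρ0 : ∀ x, 0 ≤ ρ x) (hρ1 : ∑ x, ρ x = 1)
    (κ : ℝ) (d : X → ℝ)
    (hd : ∀ x, d x = (1 - γ) * ∑' t : ℕ, γ ^ t * ((Kᵀ ^ t) *ᵥ ρ) x)
    (hcov : ∀ x, d x ≤ κ * ρ x) :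
    IsUnit ((1 : Matrix X X ℝ) - γ • K) ∧
      (∀ f : X → ℝ,
        ∑ x, ρ x * ((((1 : Matrix X X ℝ) - γ • K)⁻¹ *ᵥ f) x) ^ 2 ≤
          κ / (1 - γ) ^ 2 * ∑ x, ρ x * f x ^ 2) ∧
      (∀ f : X → ℝ,
        Real.sqrt (∑ x, ρ x * ((((1 : Matrix X X ℝ) - γ • K)⁻¹ *ᵥ f) x) ^ 2) ≤
          Real.sqrt κ / (1 - γ) * Real.sqrt (∑ x, ρ x * f x ^ 2)) :=
  stmt_12_general K hK0 hK1 γ hγ0 hγ1 ρ hρ0 κ d hd hcov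
end

section
/- Let ε ∈ (0,1] and r ∈ [ε, 1/ε]. Then r·(log r)² ≤ (2/ε)·(r·log r − r + 1). -/
/-!
With `klFun r = r log r - r + 1`, one has `log² r ≤ 2 klFun r` for `r ≥ 1` and
`(r log r)² ≤ 2 klFun r` for `0 < r ≤ 1`: both sides vanish at `r = 1` and the derivatives
compare the right way. The missing factor `r`, resp. `1 / r`, is at most `1 / ε`.
-/

open Real Set InformationTheory

lemma log_sq_le_two_mul_klFun {r : ℝ} (hr : 1 ≤ r) : log r ^ 2 ≤ 2 * klFun r := by
  have hmono : MonotoneOn (fun x ↦ 2 * klFun x - log x ^ 2) (Ici 1) := by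
    refine monotoneOn_of_hasDerivWithinAt_nonneg (f' := fun x ↦ 2 * log x * (1 - x⁻¹))
      (convex_Ici 1) ?_ (fun x hx ↦ ?_) (fun x hx ↦ ?_)
    · exact fun x hx ↦ ((continuous_klFun.continuousAt.const_mul 2).sub
        ((continuousAt_log (by linarith [mem_Ici.mp hx])).pow 2)).continuousWithinAt
    · rw [interior_Ici] at hx
      have hx0 : x ≠ 0 := by linarith [mem_Ioi.mp hx]
      refine ((((hasDerivAt_klFun hx0).const_mul 2).fun_sub
        ((hasDerivAt_log hx0).fun_pow 2)).congr_deriv ?_).hasDerivWithinAt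
      field_simp
      ring
    · rw [interior_Ici] at hx
      have hx1 : 1 < x := hx
      have : x⁻¹ < 1 := inv_lt_one_of_one_lt₀ hx1
      have := log_pos hx1
      nlinarith
  simpa [klFun_one] using hmono self_mem_Ici hr hr

lemma mul_log_sq_le_two_mul_klFun {r : ℝ} (hr0 : 0 < r) (hr1 : r ≤ 1) :
    (r * log r) ^ 2 ≤ 2 * klFun r := by
  have hanti : AntitoneOn (fun x ↦ 2 * klFun x - (x * log x) ^ 2) (Ioc 0 1) := by
    refine antitoneOn_of_hasDerivWithinAt_nonpos
      (f' := fun x ↦ 2 * log x * (1 - x - x * log x)) (convex_Ioc 0 1) ?_ (fun x hx ↦ ?_)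
      (fun x hx ↦ ?_)
    · exact fun x hx ↦ ((continuous_klFun.continuousAt.const_mul 2).sub
        ((continuousAt_id.mul (continuousAt_log hx.1.ne')).pow 2)).continuousWithinAt
    · rw [interior_Ioc] at hx
      refine ((((hasDerivAt_klFun hx.1.ne').const_mul 2).fun_sub
        ((hasDerivAt_mul_log hx.1.ne').fun_pow 2)).congr_deriv ?_).hasDerivWithinAt
      ring
    · rw [interior_Ioc] at hx
      have hlog : log x < 0 := log_neg hx.1 hx.2
      have : 0 ≤ 1 - x - x * log x := by nlinarith [hx.1, hx.2]
      nlinarith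
  simpa [klFun_one] using hanti ⟨hr0, hr1⟩ ⟨zero_lt_one, le_rfl⟩ hr1

theorem stmt_14_general (ε r : ℝ) (hε0 : 0 < ε) (hr1 : ε ≤ r) (hr2 : r ≤ 1 / ε) :
    r * Real.log r ^ 2 ≤ 2 / ε * (r * Real.log r - r + 1) := by
  have hr0 : 0 < r := hε0.trans_le hr1
  rw [show r * log r - r + 1 = klFun r by rw [klFun_apply]; ring, div_mul_eq_mul_div,
    le_div_iff₀ hε0]
  rcases le_total 1 r with h1 | h1
  · have hrε : r * ε ≤ 1 := (le_div_iff₀ hε0).mp hr2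
    calc r * log r ^ 2 * ε = r * ε * log r ^ 2 := by ring
      _ ≤ log r ^ 2 := mul_le_of_le_one_left (sq_nonneg _) hrε
      _ ≤ 2 * klFun r := log_sq_le_two_mul_klFun h1
  · calc r * log r ^ 2 * ε ≤ r * log r ^ 2 * r := by gcongr
      _ = (r * log r) ^ 2 := by ring
      _ ≤ 2 * klFun r := mul_log_sq_le_two_mul_klFun hr0 h1

/-- Pointwise inequality used to convert KL error to L₂ log-error: for
`ε ∈ (0,1]` and `r ∈ [ε, 1/ε]`, `r (log r)² ≤ (2/ε)(r log r − r + 1)`. -/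
theorem stmt_14 (ε r : ℝ) (hε0 : 0 < ε) (hε1 : ε ≤ 1) (hr1 : ε ≤ r) (hr2 : r ≤ 1 / ε) :
    r * Real.log r ^ 2 ≤ 2 / ε * (r * Real.log r - r + 1) :=
  stmt_14_general ε r hε0 hr1 hr2
end

section
/- Let V^π be the regularized value of a full-support policy π, let q^π be its regularized action-value, and let π* be the soft-optimal policy induced by the unique solution q* of q = r + γ·P Ω(q). Assume |q^π(s,a)| ≤ B for all (s,a). Then J(π*) − J(π) ≤ (B/(1−γ))·∑_s d^S(s)·∑_a |π*(a|s) − π(a|s)|, where d^S is the discounted state occupancy of π* started from the initial distribution ν and J(π) = ∑_s ν(s)·V^π(s). -/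
open Matrix BigOperators Finset

lemma gibbs_aux {A : Type*} [Fintype A] (p q : A → ℝ) (hp : ∀ a, 0 < p a)
    (hq : ∀ a, 0 < q a) (hpq : ∑ a, q a ≤ ∑ a, p a) :
    ∑ a, p a * Real.log (q a / p a) ≤ 0 := by
  have h1 : ∑ a, p a * Real.log (q a / p a) ≤ ∑ a, p a * (q a / p a - 1) := by
    apply Finset.sum_le_sum
    intro a _
    exact mul_le_mul_of_nonneg_left
      (Real.log_le_sub_one_of_pos (div_pos (hq a) (hp a))) (hp a).le
  have h2 : ∑ a, p a * (q a / p a - 1) = (∑ a, q a) - ∑ a, p a := by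
    rw [← Finset.sum_sub_distrib]
    apply Finset.sum_congr rfl
    intro a _
    field_simp [(hp a).ne']
  linarith

lemma stoch_pow_nonneg {S : Type*} [Fintype S] [DecidableEq S]
    (M : Matrix S S ℝ) (hM0 : ∀ s s', 0 ≤ M s s') :
    ∀ n s s', 0 ≤ (M ^ n) s s' := by
  intro n
  induction n with
  | zero => intro s s'; simp only [pow_zero, Matrix.one_apply]; positivity
  | succ n ih =>
    intro s s'
    rw [pow_succ, Matrix.mul_apply]
    exact Finset.sum_nonneg fun k _ => mul_nonneg (ih s k) (hM0 k s')

lemma stoch_pow_rowsum {S : Type*} [Fintype S] [DecidableEq S]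
    (M : Matrix S S ℝ) (hM1 : ∀ s, ∑ s', M s s' = 1) :
    ∀ n s, ∑ s', (M ^ n) s s' = 1 := by
  intro n
  induction n with
  | zero => intro s; simp [Matrix.one_apply]
  | succ n ih =>
    intro s
    simp only [pow_succ, Matrix.mul_apply]
    rw [Finset.sum_comm]
    calc ∑ k, ∑ s', (M ^ n) s k * M k s' = ∑ k, (M ^ n) s k * ∑ s', M k s' := by
           simp [Finset.mul_sum]
      _ = 1 := by simp [hM1, ih]

lemma occ_bound {S : Type*} [Fintype S] [Nonempty S] [DecidableEq S]
    (M : Matrix S S ℝ) (hM0 : ∀ s s', 0 ≤ M s s') (hM1 : ∀ s, ∑ s', M s s' = 1)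
    (γ : ℝ) (hγ0 : 0 ≤ γ) (hγ1 : γ < 1)
    (ν : S → ℝ) (hν0 : ∀ s, 0 ≤ ν s) (hν1 : ∑ s, ν s = 1)
    (Δ g : S → ℝ) (hg0 : ∀ s, 0 ≤ g s)
    (hkey : ∀ s, Δ s ≤ g s + γ * (M *ᵥ Δ) s) :
    ν ⬝ᵥ Δ ≤ ∑' t : ℕ, γ ^ t * (ν ⬝ᵥ ((M ^ t) *ᵥ g)) := by
  have hpow0 := stoch_pow_nonneg M hM0
  have hpow1 := stoch_pow_rowsum M hM1
  -- monotonicity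
  have hmono : ∀ (n : ℕ) (u v : S → ℝ), (∀ s, u s ≤ v s) →
      ∀ s, ((M ^ n) *ᵥ u) s ≤ ((M ^ n) *ᵥ v) s := by
    intro n u v huv s
    apply Finset.sum_le_sum
    intro s' _
    exact mul_le_mul_of_nonneg_left (huv s') (hpow0 n s s')
  -- iteration
  have hiter : ∀ (n : ℕ) (s : S), Δ s ≤
      (∑ t ∈ Finset.range n, γ ^ t * (((M ^ t) *ᵥ g) s)) + γ ^ n * (((M ^ n) *ᵥ Δ) s) := by
    intro n
    induction n with
    | zero => intro s; simp [Matrix.one_mulVec]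
    | succ n ih =>
      intro s
      have h1 := ih s
      have heq : (fun s => g s + γ * (M *ᵥ Δ) s) = g + γ • (M *ᵥ Δ) := by
        funext s'; simp [Pi.add_apply, Pi.smul_apply, smul_eq_mul]
      have h2 : ((M ^ n) *ᵥ Δ) s ≤ ((M ^ n) *ᵥ g) s + γ * (((M ^ (n+1)) *ᵥ Δ) s) := by
        have hm := hmono n Δ (fun s => g s + γ * (M *ᵥ Δ) s) hkey s
        rw [heq] at hm
        rw [Matrix.mulVec_add, Matrix.mulVec_smul, Matrix.mulVec_mulVec, ← pow_succ] at hm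
        simpa using hm
      have h3 : γ ^ n * ((M ^ n) *ᵥ Δ) s ≤
          γ ^ n * (((M ^ n) *ᵥ g) s + γ * (((M ^ (n+1)) *ᵥ Δ) s)) :=
        mul_le_mul_of_nonneg_left h2 (pow_nonneg hγ0 n)
      rw [Finset.sum_range_succ]
      calc Δ s ≤ (∑ t ∈ Finset.range n, γ ^ t * (((M ^ t) *ᵥ g) s)) + γ ^ n * (((M ^ n) *ᵥ Δ) s) := h1
        _ ≤ (∑ t ∈ Finset.range n, γ ^ t * (((M ^ t) *ᵥ g) s)) +
            (γ ^ n * (((M ^ n) *ᵥ g) s) + γ ^ (n+1) * (((M ^ (n+1)) *ᵥ Δ) s)) := by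
            rw [pow_succ]; nlinarith [h3]
        _ = _ := by ring
  -- bound on g and Δ
  obtain ⟨Cg, hCg⟩ := Finite.exists_le g
  obtain ⟨CΔ, hCΔ⟩ := Finite.exists_le (fun s => |Δ s|)
  have hCΔ0 : 0 ≤ CΔ := le_trans (abs_nonneg _) (hCΔ (Classical.arbitrary S))
  -- the series
  set a : ℕ → ℝ := fun t => γ ^ t * (ν ⬝ᵥ ((M ^ t) *ᵥ g)) with ha_def
  have hMg_le : ∀ t s, ((M ^ t) *ᵥ g) s ≤ Cg := by
    intro t s
    calc ((M ^ t) *ᵥ g) s ≤ ∑ s', (M ^ t) s s' * Cg :=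
          Finset.sum_le_sum fun s' _ => mul_le_mul_of_nonneg_left (hCg s') (hpow0 t s s')
      _ = Cg := by rw [← Finset.sum_mul, hpow1, one_mul]
  have hMg_0 : ∀ t s, 0 ≤ ((M ^ t) *ᵥ g) s := fun t s =>
    Finset.sum_nonneg fun s' _ => mul_nonneg (hpow0 t s s') (hg0 s')
  have hdot_le : ∀ t, ν ⬝ᵥ ((M ^ t) *ᵥ g) ≤ Cg := by
    intro t
    calc ν ⬝ᵥ ((M ^ t) *ᵥ g) ≤ ∑ s, ν s * Cg :=
          Finset.sum_le_sum fun s _ => mul_le_mul_of_nonneg_left (hMg_le t s) (hν0 s)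
      _ = Cg := by rw [← Finset.sum_mul, hν1, one_mul]
  have ha0 : ∀ t, 0 ≤ a t := fun t =>
    mul_nonneg (pow_nonneg hγ0 t)
      (Finset.sum_nonneg fun s _ => mul_nonneg (hν0 s) (hMg_0 t s))
  have hsummable : Summable a := by
    apply Summable.of_nonneg_of_le ha0 (fun t => ?_)
      ((summable_geometric_of_lt_one hγ0 hγ1).mul_left Cg)
    calc a t ≤ γ ^ t * Cg :=
          mul_le_mul_of_nonneg_left (hdot_le t) (pow_nonneg hγ0 t)
      _ = Cg * γ ^ t := by ring
  -- tail term
  have htail : Filter.Tendsto (fun n => γ ^ n * (ν ⬝ᵥ ((M ^ n) *ᵥ Δ))) Filter.atTop (nhds 0) := by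
    refine squeeze_zero_norm (fun n => ?_)
      (by simpa using (tendsto_pow_atTop_nhds_zero_of_lt_one hγ0 hγ1).const_mul CΔ)
    ·
      rw [Real.norm_eq_abs, abs_mul, abs_pow, abs_of_nonneg hγ0]
      have h1 : |ν ⬝ᵥ ((M ^ n) *ᵥ Δ)| ≤ CΔ := by
        calc |ν ⬝ᵥ ((M ^ n) *ᵥ Δ)| ≤ ∑ s, |ν s * ((M ^ n) *ᵥ Δ) s| :=
              Finset.abs_sum_le_sum_abs _ _
          _ ≤ ∑ s, ν s * CΔ := by
              apply Finset.sum_le_sum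
              intro s _
              rw [abs_mul, abs_of_nonneg (hν0 s)]
              apply mul_le_mul_of_nonneg_left _ (hν0 s)
              calc |((M ^ n) *ᵥ Δ) s| ≤ ∑ s', |(M ^ n) s s' * Δ s'| :=
                    Finset.abs_sum_le_sum_abs _ _
                _ ≤ ∑ s', (M ^ n) s s' * CΔ := by
                    apply Finset.sum_le_sum
                    intro s' _
                    rw [abs_mul, abs_of_nonneg (hpow0 n s s')]
                    exact mul_le_mul_of_nonneg_left (hCΔ s') (hpow0 n s s')
                _ = CΔ := by rw [← Finset.sum_mul, hpow1, one_mul]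
          _ = CΔ := by rw [← Finset.sum_mul, hν1, one_mul]
      calc γ ^ n * |ν ⬝ᵥ ((M ^ n) *ᵥ Δ)| ≤ γ ^ n * CΔ :=
            mul_le_mul_of_nonneg_left h1 (pow_nonneg hγ0 n)
        _ = CΔ * γ ^ n := by ring
  -- combine
  have hF : Filter.Tendsto
      (fun n => (∑ t ∈ Finset.range n, a t) + γ ^ n * (ν ⬝ᵥ ((M ^ n) *ᵥ Δ)))
      Filter.atTop (nhds (∑' t, a t)) := by
    have := hsummable.hasSum.tendsto_sum_nat.add htail
    simpa using this
  apply ge_of_tendsto' hF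
  intro n
  calc ν ⬝ᵥ Δ ≤ ∑ s, ν s * ((∑ t ∈ Finset.range n, γ ^ t * (((M ^ t) *ᵥ g) s))
        + γ ^ n * (((M ^ n) *ᵥ Δ) s)) :=
        Finset.sum_le_sum fun s _ => mul_le_mul_of_nonneg_left (hiter n s) (hν0 s)
    _ = (∑ t ∈ Finset.range n, a t) + γ ^ n * (ν ⬝ᵥ ((M ^ n) *ᵥ Δ)) := by
        simp only [mul_add, Finset.sum_add_distrib, ha_def, dotProduct]
        congr 1
        · simp only [Finset.mul_sum]
          rw [Finset.sum_comm]
          exact Finset.sum_congr rfl fun t _ => Finset.sum_congr rfl fun s _ => by ring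
        · simp only [Finset.mul_sum]
          exact Finset.sum_congr rfl fun s _ => by ring

lemma occ_eq {S : Type*} [Fintype S] [Nonempty S] [DecidableEq S]
    (M : Matrix S S ℝ) (hM0 : ∀ s s', 0 ≤ M s s') (hM1 : ∀ s, ∑ s', M s s' = 1)
    (γ : ℝ) (hγ0 : 0 ≤ γ) (hγ1 : γ < 1)
    (ν : S → ℝ) (hν0 : ∀ s, 0 ≤ ν s) (hν1 : ∑ s, ν s = 1)
    (h : S → ℝ) (hh0 : ∀ s, 0 ≤ h s) :
    ∑ s, ((1 - γ) * ∑' t : ℕ, γ ^ t * ((Mᵀ ^ t) *ᵥ ν) s) * h s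
      = (1 - γ) * ∑' t : ℕ, γ ^ t * (ν ⬝ᵥ ((M ^ t) *ᵥ h)) := by
  have hpow0 := stoch_pow_nonneg M hM0
  have hpow1 := stoch_pow_rowsum M hM1
  have hTν0 : ∀ (t : ℕ) (s : S), 0 ≤ ((Mᵀ ^ t) *ᵥ ν) s := by
    intro t s
    rw [← Matrix.transpose_pow]
    exact Finset.sum_nonneg fun s' _ =>
      mul_nonneg (hpow0 t s' s) (hν0 s')
  have hTν1 : ∀ (t : ℕ) (s : S), ((Mᵀ ^ t) *ᵥ ν) s ≤ 1 := by
    intro t s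
    rw [← Matrix.transpose_pow]
    have hentry : ∀ s', (M ^ t) s' s ≤ 1 := by
      intro s'
      calc (M ^ t) s' s ≤ ∑ s'', (M ^ t) s' s'' :=
            Finset.single_le_sum (fun s'' _ => hpow0 t s' s'') (Finset.mem_univ s)
        _ = 1 := hpow1 t s'
    calc ((M ^ t)ᵀ *ᵥ ν) s = ∑ s', (M ^ t) s' s * ν s' := by
          simp [Matrix.mulVec, dotProduct, Matrix.transpose_apply]
      _ ≤ ∑ s', 1 * ν s' :=
          Finset.sum_le_sum fun s' _ =>
            mul_le_mul_of_nonneg_right (hentry s') (hν0 s')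
      _ = 1 := by simp [hν1]
  have hsummable : ∀ s : S, Summable (fun t : ℕ => γ ^ t * ((Mᵀ ^ t) *ᵥ ν) s * h s) := by
    intro s
    apply Summable.of_nonneg_of_le
      (fun t => mul_nonneg (mul_nonneg (pow_nonneg hγ0 t) (hTν0 t s)) (hh0 s))
      (fun t => ?_) ((summable_geometric_of_lt_one hγ0 hγ1).mul_right (h s))
    calc γ ^ t * ((Mᵀ ^ t) *ᵥ ν) s * h s ≤ γ ^ t * 1 * h s := by
          apply mul_le_mul_of_nonneg_right _ (hh0 s)
          exact mul_le_mul_of_nonneg_left (hTν1 t s) (pow_nonneg hγ0 t)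
      _ = γ ^ t * h s := by ring
  calc ∑ s, ((1 - γ) * ∑' t : ℕ, γ ^ t * ((Mᵀ ^ t) *ᵥ ν) s) * h s
      = (1 - γ) * ∑ s, ∑' t : ℕ, γ ^ t * ((Mᵀ ^ t) *ᵥ ν) s * h s := by
        rw [Finset.mul_sum]
        apply Finset.sum_congr rfl
        intro s _
        rw [mul_assoc, ← tsum_mul_right]
    _ = (1 - γ) * ∑' t : ℕ, ∑ s, γ ^ t * ((Mᵀ ^ t) *ᵥ ν) s * h s := by
        rw [← Summable.tsum_finsetSum fun s _ => hsummable s]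
    _ = (1 - γ) * ∑' t : ℕ, γ ^ t * (ν ⬝ᵥ ((M ^ t) *ᵥ h)) := by
        congr 1
        apply tsum_congr
        intro t
        rw [Matrix.dotProduct_mulVec, ← Matrix.mulVec_transpose, Matrix.transpose_pow]
        simp only [dotProduct, Finset.mul_sum]
        apply Finset.sum_congr rfl
        intro s _
        ring

/-- Lemma (Regularized performance difference): if the regularized action value
`q^π` of a full-support policy `π` is bounded by `B`, then the regularized
regret of `π` against the soft-optimal policy `π*` is bounded by
`(B/(1−γ)) · E_{d^S}[‖π*(·|s) − π(·|s)‖₁]`, where `J(π*) = ∑_s ν(s)·Ω(q*)(s)`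
since `V^{π*} = Ω(q*)`. -/
theorem stmt_16 {S A : Type*} [Fintype S] [Fintype A] [Nonempty S] [Nonempty A]
    [DecidableEq S]
    (P : S → A → S → ℝ) (hP0 : ∀ s a s', 0 ≤ P s a s') (hP1 : ∀ s a, ∑ s', P s a s' = 1)
    (r : S → A → ℝ) (γ τ : ℝ) (hγ0 : 0 ≤ γ) (hγ1 : γ < 1) (hτ : 0 < τ)
    (πref : S → A → ℝ) (hπref0 : ∀ s a, 0 < πref s a) (hπref1 : ∀ s, ∑ a, πref s a = 1)
    (π : S → A → ℝ) (hπ0 : ∀ s a, 0 < π s a) (hπ1 : ∀ s, ∑ a, π s a = 1)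
    (ν : S → ℝ) (hν0 : ∀ s, 0 ≤ ν s) (hν1 : ∑ s, ν s = 1)
    (B : ℝ)
    (Vπ : S → ℝ)
    (hVπ : ∀ s, Vπ s = ∑ a, π s a *
      (r s a - τ * Real.log (π s a / πref s a) + γ * ∑ s', P s a s' * Vπ s'))
    (qπ : S → A → ℝ)
    (hqπ : ∀ s a, qπ s a =
      r s a - τ * Real.log (π s a / πref s a) + γ * ∑ s', P s a s' * Vπ s')
    (hB : ∀ s a, |qπ s a| ≤ B)
    (qstar : S → A → ℝ)
    (hqstar : ∀ s a, qstar s a = r s a + γ * ∑ s', P s a s' *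
      (τ * Real.log (∑ a', πref s' a' * Real.exp (qstar s' a' / τ))))
    (πstar : S → A → ℝ)
    (hπstar : ∀ s a, πstar s a =
      πref s a * Real.exp (qstar s a / τ) / ∑ a', πref s a' * Real.exp (qstar s a' / τ))
    (dS : S → ℝ)
    (hdS : ∀ s, dS s = (1 - γ) * ∑' t : ℕ,
      γ ^ t * (((Matrix.of fun s₁ s₂ => ∑ a, πstar s₁ a * P s₁ a s₂)ᵀ ^ t) *ᵥ ν) s) :
    (∑ s, ν s * (τ * Real.log (∑ a, πref s a * Real.exp (qstar s a / τ)))) -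
        ∑ s, ν s * Vπ s ≤
      B / (1 - γ) * ∑ s, dS s * ∑ a, |πstar s a - π s a| := by
  classical
  have hZpos : ∀ s, 0 < ∑ a, πref s a * Real.exp (qstar s a / τ) :=
    fun s => Finset.sum_pos (fun a _ => mul_pos (hπref0 s a) (Real.exp_pos _))
      Finset.univ_nonempty
  have hπstar0 : ∀ s a, 0 < πstar s a := by
    intro s a
    rw [hπstar]
    exact div_pos (mul_pos (hπref0 s a) (Real.exp_pos _)) (hZpos s)
  have hπstar1 : ∀ s, ∑ a, πstar s a = 1 := by
    intro s
    rw [Finset.sum_congr rfl fun a (_ : a ∈ Finset.univ) => hπstar s a,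
      ← Finset.sum_div, div_self (hZpos s).ne']
  set Vs : S → ℝ := fun s => τ * Real.log (∑ a, πref s a * Real.exp (qstar s a / τ))
    with hVs_def
  have hVs : ∀ s, Vs s = τ * Real.log (∑ a, πref s a * Real.exp (qstar s a / τ)) :=
    fun s => rfl
  have hlog : ∀ s a, τ * Real.log (πstar s a / πref s a) = qstar s a - Vs s := by
    intro s a
    have h1 : πstar s a / πref s a
        = Real.exp (qstar s a / τ) / ∑ a', πref s a' * Real.exp (qstar s a' / τ) := by
      rw [hπstar]
      rw [div_div, mul_comm (∑ a' : A, πref s a' * Real.exp (qstar s a' / τ)) (πref s a),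
        ← div_div, mul_div_cancel_left₀ _ (hπref0 s a).ne']
    rw [h1, Real.log_div (Real.exp_ne_zero _) (hZpos s).ne', Real.log_exp, hVs]
    field_simp
  set M : Matrix S S ℝ := Matrix.of fun s₁ s₂ => ∑ a, πstar s₁ a * P s₁ a s₂ with hM_def
  have hMapp : ∀ s s', M s s' = ∑ a, πstar s a * P s a s' := fun s s' => rfl
  have hM0 : ∀ s s', 0 ≤ M s s' := fun s s' =>
    Finset.sum_nonneg fun a _ => mul_nonneg (hπstar0 s a).le (hP0 s a s')
  have hM1 : ∀ s, ∑ s', M s s' = 1 := by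
    intro s
    simp only [hMapp]
    rw [Finset.sum_comm]
    calc ∑ a, ∑ s', πstar s a * P s a s' = ∑ a, πstar s a * ∑ s', P s a s' := by
          simp [Finset.mul_sum]
      _ = 1 := by simp [hP1, hπstar1]
  set Δ : S → ℝ := fun s => Vs s - Vπ s with hΔ_def
  have hΔs : ∀ s, Δ s = Vs s - Vπ s := fun s => rfl
  set g : S → ℝ := fun s => B * ∑ a, |πstar s a - π s a| with hg_def
  have hg : ∀ s, g s = B * ∑ a, |πstar s a - π s a| := fun s => rfl
  have hB0 : 0 ≤ B :=
    le_trans (abs_nonneg _) (hB (Classical.arbitrary S) (Classical.arbitrary A))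
  have hg0 : ∀ s, 0 ≤ g s := fun s =>
    mul_nonneg hB0 (Finset.sum_nonneg fun a _ => abs_nonneg _)
  have hVπq : ∀ s, Vπ s = ∑ a, π s a * qπ s a := by
    intro s
    rw [hVπ s]
    exact Finset.sum_congr rfl fun a _ => by rw [hqπ]
  have hkey : ∀ s, Δ s ≤ g s + γ * (M *ᵥ Δ) s := by
    intro s
    have e1 : Vs s = ∑ a, πstar s a * (qstar s a - τ * Real.log (πstar s a / πref s a)) := by
      have h : ∀ a, qstar s a - τ * Real.log (πstar s a / πref s a) = Vs s := by
        intro a; rw [hlog s a]; ring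
      calc Vs s = (∑ a, πstar s a) * Vs s := by rw [hπstar1 s, one_mul]
        _ = ∑ a, πstar s a * (qstar s a - τ * Real.log (πstar s a / πref s a)) := by
          rw [Finset.sum_mul]
          exact Finset.sum_congr rfl fun a _ => by rw [h a]
    have hgb := gibbs_aux (πstar s) (π s) (hπstar0 s) (hπ0 s)
      (le_of_eq (by rw [hπ1 s, hπstar1 s]))
    have e2 : ∑ a, πstar s a * (qstar s a - τ * Real.log (πstar s a / πref s a)) ≤
        ∑ a, πstar s a * (qstar s a - τ * Real.log (π s a / πref s a)) := by
      rw [← sub_nonneg, ← Finset.sum_sub_distrib]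
      have heq : ∑ a, (πstar s a * (qstar s a - τ * Real.log (π s a / πref s a)) -
          πstar s a * (qstar s a - τ * Real.log (πstar s a / πref s a)))
          = -τ * ∑ a, πstar s a * Real.log (π s a / πstar s a) := by
        rw [Finset.mul_sum]
        apply Finset.sum_congr rfl
        intro a _
        rw [Real.log_div (hπ0 s a).ne' (hπstar0 s a).ne',
            Real.log_div (hπ0 s a).ne' (hπref0 s a).ne',
            Real.log_div (hπstar0 s a).ne' (hπref0 s a).ne']
        ring
      rw [heq]
      nlinarith [hgb, hτ]
    have e3 : ∀ a, qstar s a - τ * Real.log (π s a / πref s a)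
        = qπ s a + γ * ∑ s', P s a s' * Δ s' := by
      intro a
      rw [hqstar s a, hqπ s a]
      have hd : ∑ s', P s a s' * Δ s'
          = (∑ s', P s a s' * Vs s') - ∑ s', P s a s' * Vπ s' := by
        rw [← Finset.sum_sub_distrib]
        exact Finset.sum_congr rfl fun s' _ => by rw [hΔs]; ring
      rw [hd]
      simp only [← hVs]
      ring
    have e4 : ∑ a, πstar s a * (qπ s a + γ * ∑ s', P s a s' * Δ s')
        = (∑ a, πstar s a * qπ s a) + γ * (M *ᵥ Δ) s := by
      have hMv : (M *ᵥ Δ) s = ∑ s', (∑ a, πstar s a * P s a s') * Δ s' := by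
        simp only [Matrix.mulVec, dotProduct, hMapp]
      rw [hMv]
      simp only [mul_add, Finset.sum_add_distrib, Finset.mul_sum, Finset.sum_mul]
      congr 1
      rw [Finset.sum_comm]
      exact Finset.sum_congr rfl fun s' _ => Finset.sum_congr rfl fun a _ => by ring
    have e5 : (∑ a, πstar s a * qπ s a) - Vπ s ≤ g s := by
      rw [hVπq s, ← Finset.sum_sub_distrib]
      have h1 : ∑ a, (πstar s a * qπ s a - π s a * qπ s a)
          ≤ ∑ a, |πstar s a - π s a| * B := by
        apply Finset.sum_le_sum
        intro a _
        have hx : πstar s a * qπ s a - π s a * qπ s a = (πstar s a - π s a) * qπ s a := by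
          ring
        rw [hx]
        calc (πstar s a - π s a) * qπ s a ≤ |(πstar s a - π s a) * qπ s a| := le_abs_self _
          _ = |πstar s a - π s a| * |qπ s a| := abs_mul _ _
          _ ≤ |πstar s a - π s a| * B :=
              mul_le_mul_of_nonneg_left (hB s a) (abs_nonneg _)
      calc ∑ a, (πstar s a * qπ s a - π s a * qπ s a) ≤ ∑ a, |πstar s a - π s a| * B := h1
        _ = g s := by rw [hg, ← Finset.sum_mul, mul_comm]
    calc Δ s = Vs s - Vπ s := hΔs s
      _ ≤ (∑ a, πstar s a * (qstar s a - τ * Real.log (π s a / πref s a))) - Vπ s := by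
          rw [e1]; linarith [e2]
      _ = (∑ a, πstar s a * qπ s a) + γ * (M *ᵥ Δ) s - Vπ s := by
          rw [show (∑ a, πstar s a * (qstar s a - τ * Real.log (π s a / πref s a)))
              = ∑ a, πstar s a * (qπ s a + γ * ∑ s', P s a s' * Δ s') from
            Finset.sum_congr rfl fun a _ => by rw [e3 a], e4]
      _ ≤ g s + γ * (M *ᵥ Δ) s := by linarith [e5]
  have hmain := occ_bound M hM0 hM1 γ hγ0 hγ1 ν hν0 hν1 Δ g hg0 hkey
  have hocc := occ_eq M hM0 hM1 γ hγ0 hγ1 ν hν0 hν1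
    (fun s => ∑ a, |πstar s a - π s a|)
    (fun s => Finset.sum_nonneg fun a _ => abs_nonneg _)
  have hLHS : (∑ s, ν s * (τ * Real.log (∑ a, πref s a * Real.exp (qstar s a / τ)))) -
      ∑ s, ν s * Vπ s = ν ⬝ᵥ Δ := by
    simp only [dotProduct]
    rw [← Finset.sum_sub_distrib]
    apply Finset.sum_congr rfl
    intro s _
    rw [hΔs s, hVs s]
    ring
  have hgB : ∀ t : ℕ, ν ⬝ᵥ ((M ^ t) *ᵥ g)
      = B * (ν ⬝ᵥ ((M ^ t) *ᵥ fun s => ∑ a, |πstar s a - π s a|)) := by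
    intro t
    simp only [Matrix.mulVec, dotProduct, hg, Finset.mul_sum]
    apply Finset.sum_congr rfl
    intro s _
    apply Finset.sum_congr rfl
    intro s' _
    apply Finset.sum_congr rfl
    intro a _
    ring
  have hRHS : B / (1 - γ) * ∑ s, dS s * ∑ a, |πstar s a - π s a|
      = ∑' t : ℕ, γ ^ t * (ν ⬝ᵥ ((M ^ t) *ᵥ g)) := by
    have h1 : ∑ s, dS s * ∑ a, |πstar s a - π s a|
        = (1 - γ) * ∑' t : ℕ,
          γ ^ t * (ν ⬝ᵥ ((M ^ t) *ᵥ fun s => ∑ a, |πstar s a - π s a|)) := by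
      rw [← hocc]
      apply Finset.sum_congr rfl
      intro s _
      rw [hdS s]
    rw [h1, ← mul_assoc, div_mul_cancel₀ B (by linarith : (1:ℝ) - γ ≠ 0)]
    rw [← tsum_mul_left]
    exact tsum_congr fun t => by rw [hgB t]; ring
  rw [hRHS, hLHS]
  exact hmain
end
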